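/- arXiv:math/0606232 — 8 statements merged into one kernel-verified Lean document; each statement's English description precedes it below -/
import Mathlib

section
/- Every left-invariant order that is recurrent for every cyclic subgroup is Conradian. -/
/-- `r` is a left-invariant (strict total) order on the group `Γ`. -/
def IsLeftInvariantOrder {Γ : Type*} [Group Γ] (r : Γ → Γ → Prop) : Prop :=
  (∀ a, ¬ r a a) ∧ (∀ a b c, r a b → r b c → r a c) ∧
  (∀ a b, a ≠ b → r a b ∨ r b a) ∧ (∀ γ a b, r a b → r (γ * a) (γ * b))

/-- The order `r` is recurrent for every cyclic subgroup: for every `γ` and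
every increasing chain `λ₁ ≺ ⋯ ≺ λ_r` there exist arbitrarily large positive
integers `n` with `λ₁γⁿ ≺ ⋯ ≺ λ_rγⁿ`. -/
def IsRecurrentOrder {Γ : Type*} [Group Γ] (r : Γ → Γ → Prop) : Prop :=
  ∀ (γ : Γ) (k : ℕ) (lam : Fin k → Γ),
    (∀ i j : Fin k, i < j → r (lam i) (lam j)) →
    ∀ N : ℕ, ∃ n : ℕ, N ≤ n ∧ 0 < n ∧
      ∀ i j : Fin k, i < j → r (lam i * γ ^ n) (lam j * γ ^ n)

/-- A left-invariant order that is recurrent for every cyclic subgroup is Conradian. -/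
theorem recurrent_isConradian {Γ : Type*} [Group Γ] (r : Γ → Γ → Prop)
    (hr : IsLeftInvariantOrder r) (hrec : IsRecurrentOrder r) :
    ∀ γ lam : Γ, r 1 γ → r 1 lam → ∃ n : ℕ, 0 < n ∧ r γ (lam * γ ^ n) := by
  obtain ⟨hirr, htrans, htot, hinv⟩ := hr
  intro γ lam hγ hlam
  -- positive powers are positive
  have hpow : ∀ n : ℕ, 0 < n → r 1 (γ ^ n) := by
    intro n hn
    induction n with
    | zero => omega
    | succ m ih =>
      rcases Nat.eq_zero_or_pos m with hm | hm
      · subst hm; simpa using hγ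
      · have h1 := ih hm
        have h2 : r γ (γ * γ ^ m) := by simpa using hinv γ 1 (γ ^ m) h1
        have : r 1 (γ * γ ^ m) := htrans _ _ _ hγ h2
        simpa [pow_succ'] using this
  obtain ⟨n, hN, hn, h⟩ := hrec γ 2 ![1, lam]
    (by
      intro i j hij
      fin_cases i <;> fin_cases j <;> simp_all
      ) 1
  have key : r (γ ^ n) (lam * γ ^ n) := by
    have := h 0 1 (by decide)
    simpa using this
  refine ⟨n, hn, ?_⟩
  rcases Nat.lt_or_ge n 2 with h2 | h2
  · interval_cases n
    simpa using key
  · have : r γ (γ ^ n) := by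
      have h1 : r 1 (γ ^ (n - 1)) := hpow (n - 1) (by omega)
      have h2 : r γ (γ * γ ^ (n - 1)) := by simpa using hinv γ 1 _ h1
      have hne : γ * γ ^ (n - 1) = γ ^ n := by
        rw [← pow_succ']
        congr 1
        omega
      rwa [hne] at h2
    exact htrans _ _ _ this key
end

section
/- Let ≺ be a left-invariant order on a finitely generated group Γ that is recurrent for every cyclic subgroup, and for γ ≻ e let Λ_γ = {λ ∈ Γ : λⁿ ≺ γ for all n ∈ ℤ}. Then Λ_γ is a subgroup of Γ and is convex with respect to ≺. -/
section

variable {G : Type*} [Group G]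

theorem IsRecurrentOrder.exists_mul_pow_lt_mul_pow {r : G → G → Prop}
    (hrec : IsRecurrentOrder r) (c : G) {a b : G} (hab : r a b) (N : ℕ) :
    ∃ n, N ≤ n ∧ r (a * c ^ n) (b * c ^ n) := by
  obtain ⟨n, hNn, -, hn⟩ := hrec c 2 ![a, b] (by
    intro i j hij
    fin_cases i <;> fin_cases j <;> simp_all) N
  exact ⟨n, hNn, hn 0 1 Fin.zero_lt_one⟩

noncomputable abbrev IsLeftInvariantOrder.linearOrder {r : G → G → Prop}
    (hr : IsLeftInvariantOrder r) : LinearOrder G :=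
  haveI : IsStrictTotalOrder G r :=
    { irrefl := hr.1, trans := hr.2.1,
      trichotomous := fun a b hab hba => by_contra fun h => (hr.2.2.1 a b h).elim hab hba }
  haveI := Classical.decRel r
  linearOrderOfSTO r

section LT

variable [LT G]

/-- The set `Λ_γ`. -/
def zpowsBelow (γ : G) : Set G := {g | ∀ n : ℤ, g ^ n < γ}

variable {γ : G}

theorem one_mem_zpowsBelow (hγ : 1 < γ) : 1 ∈ zpowsBelow γ := fun n => by
  simpa using hγ

theorem inv_mem_zpowsBelow {a : G} (ha : a ∈ zpowsBelow γ) : a⁻¹ ∈ zpowsBelow γ := fun n => by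
  simpa only [inv_zpow'] using ha (-n)

end LT

section LeftOrdered

variable [LinearOrder G] {γ : G}

theorem max_mabs_mem_zpowsBelow {a b : G} (ha : a ∈ zpowsBelow γ) (hb : b ∈ zpowsBelow γ) :
    max |a|ₘ |b|ₘ ∈ zpowsBelow γ :=
  max_rec' (· ∈ zpowsBelow γ) (mabs_by_cases (· ∈ zpowsBelow γ) ha (inv_mem_zpowsBelow ha))
    (mabs_by_cases (· ∈ zpowsBelow γ) hb (inv_mem_zpowsBelow hb))

variable [MulLeftMono G] (hrec : IsRecurrentOrder ((· < ·) : G → G → Prop))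
include hrec

theorem exists_mul_lt_pow {c h x : G} (hc : 1 ≤ c) (hh : h ≤ c) {p : ℕ} (hx : x < c ^ p) :
    ∃ q : ℕ, h * x < c ^ q := by
  rcases hh.lt_or_eq with hh | rfl
  · obtain ⟨m, hpm, hm⟩ := hrec.exists_mul_pow_lt_mul_pow c hh p
    refine ⟨m + 1, ?_⟩
    calc h * x < h * c ^ m := mul_lt_mul_right (hx.trans_le (pow_le_pow_right' hc hpm)) h
      _ < c * c ^ m := hm
      _ = c ^ (m + 1) := (pow_succ' c m).symm
  · exact ⟨p + 1, by rw [pow_succ']; exact mul_lt_mul_right hx h⟩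

theorem exists_lt_pow_of_mem_closure {c w : G} (hc : 1 < c)
    (hw : w ∈ Submonoid.closure {h | h ≤ c}) : ∃ q : ℕ, w < c ^ q := by
  induction hw using Submonoid.closure_induction_left with
  | one => exact ⟨1, by simpa using hc⟩
  | mul_left h hh y _ ih =>
    obtain ⟨p, hp⟩ := ih
    exact exists_mul_lt_pow hrec hc.le hh hp

theorem closure_mabs_le_subset_zpowsBelow {d : G} (hγ : 1 < γ) (hd : d ∈ zpowsBelow γ) :
    (Subgroup.closure {h | |h|ₘ ≤ d} : Set G) ⊆ zpowsBelow γ := by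
  intro w hw
  rcases le_or_gt d 1 with hd1 | hd1
  · have hbot : Subgroup.closure {h : G | |h|ₘ ≤ d} = ⊥ :=
      Subgroup.closure_eq_bot_iff.2 fun h hh => by
        obtain ⟨h_le, h_inv_le⟩ := mabs_le'.1 (hh.trans hd1)
        exact le_antisymm h_le (Left.inv_le_one_iff.1 h_inv_le)
    rw [hbot, Subgroup.coe_bot, Set.mem_singleton_iff] at hw
    exact hw ▸ one_mem_zpowsBelow hγ
  · intro n
    have hwn : w ^ n ∈ Submonoid.closure {h | h ≤ d} := by
      have := Subgroup.zpow_mem _ hw n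
      rw [← Subgroup.mem_toSubmonoid, Subgroup.closure_toSubmonoid] at this
      refine Submonoid.closure_mono ?_ this
      rintro h (hh | hh)
      · exact (le_mabs_self h).trans hh
      · exact (le_mabs_self h).trans ((mabs_inv h).symm.le.trans hh)
    obtain ⟨q, hq⟩ := exists_lt_pow_of_mem_closure hrec hd1 hwn
    exact hq.trans (by simpa using hd q)

theorem mul_mem_zpowsBelow (hγ : 1 < γ) {a b : G} (ha : a ∈ zpowsBelow γ)
    (hb : b ∈ zpowsBelow γ) : a * b ∈ zpowsBelow γ :=
  closure_mabs_le_subset_zpowsBelow hrec hγ (max_mabs_mem_zpowsBelow ha hb) <|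
    mul_mem (Subgroup.subset_closure (le_max_left _ _))
      (Subgroup.subset_closure (le_max_right _ _))

theorem mem_zpowsBelow_of_lt_of_lt (hγ : 1 < γ) {a b g : G} (ha : a ∈ zpowsBelow γ)
    (hb : b ∈ zpowsBelow γ) (hag : a < g) (hgb : g < b) : g ∈ zpowsBelow γ := by
  have hc : a⁻¹ * b ∈ zpowsBelow γ := mul_mem_zpowsBelow hrec hγ (inv_mem_zpowsBelow ha) hb
  have h1w : 1 < a⁻¹ * g := by simpa using mul_lt_mul_right hag a⁻¹
  have hw : |a⁻¹ * g|ₘ ≤ max |a|ₘ |a⁻¹ * b|ₘ := by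
    rw [mabs_of_one_lt h1w]
    exact ((mul_lt_mul_right hgb a⁻¹).le.trans (le_mabs_self _)).trans (le_max_right _ _)
  rw [← mul_inv_cancel_left a g]
  exact closure_mabs_le_subset_zpowsBelow hrec hγ (max_mabs_mem_zpowsBelow ha hc) <|
    mul_mem (Subgroup.subset_closure (le_max_left _ _)) (Subgroup.subset_closure hw)

end LeftOrdered

end

theorem lambda_gamma_subgroup_convex_general {Γ : Type*} [Group Γ]
    (r : Γ → Γ → Prop) (hr : IsLeftInvariantOrder r) (hrec : IsRecurrentOrder r)
    (γ : Γ) (hγ : r 1 γ) :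
    (1 ∈ {lam : Γ | ∀ n : ℤ, r (lam ^ n) γ}) ∧
    (∀ a b, a ∈ {lam : Γ | ∀ n : ℤ, r (lam ^ n) γ} →
      b ∈ {lam : Γ | ∀ n : ℤ, r (lam ^ n) γ} →
      a * b ∈ {lam : Γ | ∀ n : ℤ, r (lam ^ n) γ}) ∧
    (∀ a, a ∈ {lam : Γ | ∀ n : ℤ, r (lam ^ n) γ} →
      a⁻¹ ∈ {lam : Γ | ∀ n : ℤ, r (lam ^ n) γ}) ∧
    (∀ a b g, a ∈ {lam : Γ | ∀ n : ℤ, r (lam ^ n) γ} →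
      b ∈ {lam : Γ | ∀ n : ℤ, r (lam ^ n) γ} →
      r a g → r g b → g ∈ {lam : Γ | ∀ n : ℤ, r (lam ^ n) γ}) := by
  let := hr.linearOrder
  have : MulLeftMono Γ :=
    ⟨fun g a b hab => hab.imp (congrArg (g * ·)) (hr.2.2.2 g a b)⟩
  exact ⟨one_mem_zpowsBelow hγ, fun _ _ => mul_mem_zpowsBelow hrec hγ,
    fun _ => inv_mem_zpowsBelow, fun _ _ _ => mem_zpowsBelow_of_lt_of_lt hrec hγ⟩

/-- For `γ ≻ e`, the set `Λ_γ = {λ : λⁿ ≺ γ for all n ∈ ℤ}` is a subgroup and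
is convex. -/
theorem lambda_gamma_subgroup_convex {Γ : Type*} [Group Γ] (hfg : Group.FG Γ)
    (r : Γ → Γ → Prop) (hr : IsLeftInvariantOrder r) (hrec : IsRecurrentOrder r)
    (γ : Γ) (hγ : r 1 γ) :
    (1 ∈ {lam : Γ | ∀ n : ℤ, r (lam ^ n) γ}) ∧
    (∀ a b, a ∈ {lam : Γ | ∀ n : ℤ, r (lam ^ n) γ} →
      b ∈ {lam : Γ | ∀ n : ℤ, r (lam ^ n) γ} →
      a * b ∈ {lam : Γ | ∀ n : ℤ, r (lam ^ n) γ}) ∧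
    (∀ a, a ∈ {lam : Γ | ∀ n : ℤ, r (lam ^ n) γ} →
      a⁻¹ ∈ {lam : Γ | ∀ n : ℤ, r (lam ^ n) γ}) ∧
    (∀ a b g, a ∈ {lam : Γ | ∀ n : ℤ, r (lam ^ n) γ} →
      b ∈ {lam : Γ | ∀ n : ℤ, r (lam ^ n) γ} →
      r a g → r g b → g ∈ {lam : Γ | ∀ n : ℤ, r (lam ^ n) γ}) :=
  lambda_gamma_subgroup_convex_general r hr hrec γ hγ
end

section
/- Any group admitting an Archimedean left-invariant order is abelian and torsion-free. -/
namespace ALIO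

variable {Γ : Type*} [Group Γ] {r : Γ → Γ → Prop}

private lemma asym (hr : IsLeftInvariantOrder r) {a b : Γ} (h1 : r a b) (h2 : r b a) : False :=
  hr.1 a (hr.2.1 a b a h1 h2)

private lemma inv_pos (hr : IsLeftInvariantOrder r) {a : Γ} (h : r a 1) : r 1 a⁻¹ := by
  have := hr.2.2.2 a⁻¹ _ _ h
  simpa using this

private lemma inv_neg (hr : IsLeftInvariantOrder r) {a : Γ} (h : r 1 a) : r a⁻¹ 1 := by
  have := hr.2.2.2 a⁻¹ _ _ h
  simpa using this

private lemma pow_pos (hr : IsLeftInvariantOrder r) {c : Γ} (hc : r 1 c) :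
    ∀ n : ℕ, r 1 (c ^ (n + 1)) := by
  intro n
  induction n with
  | zero => simpa using hc
  | succ k ih =>
      have h1 : r (c ^ (k + 1)) (c ^ (k + 2)) := by
        have := hr.2.2.2 (c ^ (k + 1)) _ _ hc
        simpa [pow_succ] using this
      exact hr.2.1 _ _ _ ih h1

private lemma zpow_pos' (hr : IsLeftInvariantOrder r) {c : Γ} (hc : r 1 c) {n : ℤ}
    (hn : 1 ≤ n) : r 1 (c ^ n) := by
  obtain ⟨m, rfl⟩ : ∃ m : ℕ, n = (m : ℤ) + 1 := ⟨(n - 1).toNat, by omega⟩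
  rw [show ((m : ℤ) + 1) = ((m + 1 : ℕ) : ℤ) by push_cast; ring, zpow_natCast]
  exact pow_pos hr hc m

private lemma zpow_lt (hr : IsLeftInvariantOrder r) {c : Γ} (hc : r 1 c) {m n : ℤ}
    (h : m < n) : r (c ^ m) (c ^ n) := by
  have h1 : r 1 (c ^ (n - m)) := zpow_pos' hr hc (by omega)
  have h2 := hr.2.2.2 (c ^ m) _ _ h1
  rw [mul_one, ← zpow_add, show m + (n - m) = n from by ring] at h2
  exact h2

private lemma zpow_lt_rev (hr : IsLeftInvariantOrder r) {c : Γ} (hc : r 1 c) {m n : ℤ}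
    (h : r (c ^ m) (c ^ n)) : m < n := by
  by_contra hcon
  rcases eq_or_lt_of_le (not_lt.mp hcon) with e | hlt
  · rw [e] at h; exact hr.1 _ h
  · exact asym hr h (zpow_lt hr hc hlt)

private lemma arch' (hr : IsLeftInvariantOrder r)
    (harch : ∀ γ lam : Γ, γ ≠ 1 → lam ≠ 1 → ∃ n : ℤ, r γ (lam ^ n) ∨ γ = lam ^ n)
    {c : Γ} (hc : r 1 c) (γ : Γ) : ∃ m : ℤ, 1 ≤ m ∧ r γ (c ^ m) := by
  have hc1 : c ≠ 1 := fun e => hr.1 1 (e ▸ hc)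
  by_cases hγ : γ = 1
  · exact ⟨1, le_refl _, by rw [hγ, zpow_one]; exact hc⟩
  obtain ⟨n, hn⟩ := harch γ c hγ hc1
  refine ⟨max n 0 + 1, by omega, ?_⟩
  have hlt : r (c ^ n) (c ^ (max n 0 + 1)) := zpow_lt hr hc (by omega)
  rcases hn with h | h
  · exact hr.2.1 _ _ _ h hlt
  · rw [h]; exact hlt

/-- Key lemma: one cannot have `y ≺ 1`, `xy ≺ 1` and `yx ≻ 1`. -/
private lemma no_flip (hr : IsLeftInvariantOrder r)
    (harch : ∀ γ lam : Γ, γ ≠ 1 → lam ≠ 1 → ∃ n : ℤ, r γ (lam ^ n) ∨ γ = lam ^ n)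
    {x y : Γ} (hy : r y 1) (hxy : r (x * y) 1) (hyx : r 1 (y * x)) : False := by
  have hu : r 1 (x * y)⁻¹ := inv_pos hr hxy
  obtain ⟨m, hm1, hm⟩ := arch' hr harch hu x
  have hmk : m = ((m.toNat : ℕ) : ℤ) := (Int.toNat_of_nonneg (by omega)).symm
  rw [hmk, zpow_natCast] at hm
  set k := m.toNat with hk
  have h1 : r ((x * y) ^ k * x) 1 := by
    have := hr.2.2.2 ((x * y) ^ k) _ _ hm
    rw [inv_pow, mul_inv_cancel] at this
    exact this
  have base : SemiconjBy y (x * y) (y * x) := by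
    show y * (x * y) = (y * x) * y
    group
  have e2 : (y * x) ^ (k + 1) = y * ((x * y) ^ k * x) := by
    rw [pow_succ, ← mul_assoc, ← (base.pow_right k).eq, mul_assoc]
  have h2 : r 1 (y * ((x * y) ^ k * x)) := e2 ▸ pow_pos hr hyx k
  have h3 : r y⁻¹ ((x * y) ^ k * x) := by
    have := hr.2.2.2 y⁻¹ _ _ h2
    simpa using this
  exact asym hr (hr.2.1 _ _ _ (inv_pos hr hy) h3) h1

private lemma conj_pos_pos (hr : IsLeftInvariantOrder r)
    (harch : ∀ γ lam : Γ, γ ≠ 1 → lam ≠ 1 → ∃ n : ℤ, r γ (lam ^ n) ∨ γ = lam ^ n)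
    {h z : Γ} (hh : r 1 h) (hz : r 1 z) : r 1 (h * z * h⁻¹) := by
  by_contra hcon
  have hne : h * z * h⁻¹ ≠ 1 := by
    intro e
    have h1 : h * z = h * 1 := by rw [mul_one]; exact mul_inv_eq_one.mp e
    have : z = 1 := mul_left_cancel h1
    exact hr.1 1 (this ▸ hz)
  have hneg : r (h * z * h⁻¹) 1 := by
    rcases hr.2.2.1 _ _ hne with h' | h'
    · exact h'
    · exact absurd h' hcon
  refine no_flip hr harch (x := h * z) (y := h⁻¹) (inv_neg hr hh) ?_ ?_
  · simpa [mul_assoc] using hneg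
  · simpa using hz

private lemma conj_pos (hr : IsLeftInvariantOrder r)
    (harch : ∀ γ lam : Γ, γ ≠ 1 → lam ≠ 1 → ∃ n : ℤ, r γ (lam ^ n) ∨ γ = lam ^ n)
    (h : Γ) {z : Γ} (hz : r 1 z) : r 1 (h * z * h⁻¹) := by
  rcases eq_or_ne h 1 with rfl | hne
  · simpa using hz
  rcases hr.2.2.1 1 h (Ne.symm hne) with hh | hh
  · exact conj_pos_pos hr harch hh hz
  · by_contra hcon
    have hwne : h * z * h⁻¹ ≠ 1 := by
      intro e
      have h1 : h * z = h * 1 := by rw [mul_one]; exact mul_inv_eq_one.mp e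
      have : z = 1 := mul_left_cancel h1
      exact hr.1 1 (this ▸ hz)
    have hneg : r (h * z * h⁻¹) 1 := by
      rcases hr.2.2.1 _ _ hwne with h' | h'
      · exact h'
      · exact absurd h' hcon
    have hwinv : r 1 (h * z * h⁻¹)⁻¹ := inv_pos hr hneg
    have := conj_pos_pos hr harch (inv_pos hr hh) hwinv
    have hz' : r 1 z⁻¹ := by
      simpa [mul_inv_rev, mul_assoc] using this
    exact asym hr hz' (inv_neg hr hz)

/-- Right invariance. -/
private lemma rinv (hr : IsLeftInvariantOrder r)
    (harch : ∀ γ lam : Γ, γ ≠ 1 → lam ≠ 1 → ∃ n : ℤ, r γ (lam ^ n) ∨ γ = lam ^ n)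
    {a b : Γ} (hab : r a b) (g : Γ) : r (a * g) (b * g) := by
  have h1 : r 1 (a⁻¹ * b) := by
    have := hr.2.2.2 a⁻¹ _ _ hab
    simpa using this
  have h2 := conj_pos hr harch g⁻¹ h1
  have h3 := hr.2.2.2 (a * g) _ _ h2
  simpa [mul_assoc] using h3

private lemma inv_rev (hr : IsLeftInvariantOrder r)
    (harch : ∀ γ lam : Γ, γ ≠ 1 → lam ≠ 1 → ∃ n : ℤ, r γ (lam ^ n) ∨ γ = lam ^ n)
    {a b : Γ} (hab : r a b) : r b⁻¹ a⁻¹ := by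
  have h1 : r 1 (a⁻¹ * b) := by
    have := hr.2.2.2 a⁻¹ _ _ hab
    simpa using this
  have h2 := rinv hr harch h1 b⁻¹
  simpa [mul_assoc] using h2

/-- `le` helpers: `r a b ∨ a = b`. -/
private lemma le_li (hr : IsLeftInvariantOrder r) (γ : Γ) {a b : Γ}
    (h : r a b ∨ a = b) : r (γ * a) (γ * b) ∨ γ * a = γ * b := by
  rcases h with h | h
  · exact Or.inl (hr.2.2.2 γ _ _ h)
  · exact Or.inr (by rw [h])

private lemma le_ri (hr : IsLeftInvariantOrder r)
    (harch : ∀ γ lam : Γ, γ ≠ 1 → lam ≠ 1 → ∃ n : ℤ, r γ (lam ^ n) ∨ γ = lam ^ n)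
    (g : Γ) {a b : Γ} (h : r a b ∨ a = b) : r (a * g) (b * g) ∨ a * g = b * g := by
  rcases h with h | h
  · exact Or.inl (rinv hr harch h g)
  · exact Or.inr (by rw [h])

private lemma le_trans' (hr : IsLeftInvariantOrder r) {a b c : Γ}
    (h1 : r a b ∨ a = b) (h2 : r b c ∨ b = c) : r a c ∨ a = c := by
  rcases h1 with h1 | rfl
  · rcases h2 with h2 | rfl
    · exact Or.inl (hr.2.1 _ _ _ h1 h2)
    · exact Or.inl h1
  · exact h2

private lemma le_mul (hr : IsLeftInvariantOrder r)
    (harch : ∀ γ lam : Γ, γ ≠ 1 → lam ≠ 1 → ∃ n : ℤ, r γ (lam ^ n) ∨ γ = lam ^ n)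
    {a b x y : Γ} (h1 : r a b ∨ a = b) (h2 : r x y ∨ x = y) :
    r (a * x) (b * y) ∨ a * x = b * y :=
  le_trans' hr (le_ri hr harch x h1) (le_li hr b h2)

/-- Floor: greatest `q` with `c ^ q ⪯ w`. -/
private lemma floor (hr : IsLeftInvariantOrder r)
    (harch : ∀ γ lam : Γ, γ ≠ 1 → lam ≠ 1 → ∃ n : ℤ, r γ (lam ^ n) ∨ γ = lam ^ n)
    {c : Γ} (hc : r 1 c) (w : Γ) :
    ∃ q : ℤ, (r (c ^ q) w ∨ c ^ q = w) ∧ r w (c ^ (q + 1)) := by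
  obtain ⟨m, _, hm⟩ := arch' hr harch hc w
  obtain ⟨m', _, hm'⟩ := arch' hr harch hc w⁻¹
  have hinh : ∃ z : ℤ, r (c ^ z) w ∨ c ^ z = w := by
    refine ⟨-m', Or.inl ?_⟩
    have := inv_rev hr harch hm'
    simpa [← zpow_neg] using this
  have hbdd : ∃ b : ℤ, ∀ z : ℤ, (r (c ^ z) w ∨ c ^ z = w) → z ≤ b := by
    refine ⟨m, fun z hz => ?_⟩
    have hzm : r (c ^ z) (c ^ m) := by
      rcases hz with h | h
      · exact hr.2.1 _ _ _ h hm
      · rw [h]; exact hm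
    exact le_of_lt (zpow_lt_rev hr hc hzm)
  obtain ⟨q, hq, hmax⟩ := Int.exists_greatest_of_bdd hbdd hinh
  refine ⟨q, hq, ?_⟩
  rcases eq_or_ne w (c ^ (q + 1)) with e | ne
  · exfalso; have := hmax (q + 1) (Or.inr e.symm); omega
  rcases hr.2.2.1 _ _ ne with h | h
  · exact h
  · exfalso; have := hmax (q + 1) (Or.inl h); omega

/-- Core: no positive commutator. -/
private lemma key (hr : IsLeftInvariantOrder r)
    (harch : ∀ γ lam : Γ, γ ≠ 1 → lam ≠ 1 → ∃ n : ℤ, r γ (lam ^ n) ∨ γ = lam ^ n)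
    (a b : Γ) (hc : r 1 ((b * a)⁻¹ * (a * b))) : False := by
  set g := a * b with hgdef
  set h := b * a with hhdef
  set c := h⁻¹ * g with hcdef
  have hg : g = h * c := by rw [hcdef]; group
  obtain ⟨q, hq1, hq2⟩ := floor hr harch hc (g * g)
  obtain ⟨t, ht1, ht2⟩ := floor hr harch hc a
  have hainv : r (c ^ (-(t + 1))) a⁻¹ := by
    have := inv_rev hr harch ht2
    simpa [← zpow_neg] using this
  have hhh : h * h = a⁻¹ * (g * g) * a := by rw [hgdef, hhdef]; group
  have lower : r (c ^ (q - 1)) (h * h) ∨ c ^ (q - 1) = h * h := by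
    have l2 := le_mul hr harch (le_mul hr harch (Or.inl hainv) hq1) ht1
    rw [← hhh] at l2
    rw [← zpow_add, ← zpow_add, show -(t + 1) + q + t = q - 1 from by ring] at l2
    exact l2
  have hcase : (r (c * h) (h * c) ∨ c * h = h * c) ∨ (r (h * c) (c * h) ∨ h * c = c * h) := by
    rcases eq_or_ne (c * h) (h * c) with e | ne
    · exact Or.inl (Or.inr e)
    · rcases hr.2.2.1 _ _ ne with h' | h'
      · exact Or.inl (Or.inl h')
      · exact Or.inr (Or.inl h')
  have upper : r (c ^ (q + 1)) (g * g) ∨ c ^ (q + 1) = g * g := by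
    rcases hcase with hA | hB
    · -- c * h ⪯ h * c
      have s1 : r (c * (c * c ^ (q - 1))) (c * (c * (h * h))) ∨
          c * (c * c ^ (q - 1)) = c * (c * (h * h)) :=
        le_li hr c (le_li hr c lower)
      have s2 : r (c * (c * h) * h) (c * (h * c) * h) ∨
          c * (c * h) * h = c * (h * c) * h :=
        le_ri hr harch h (le_li hr c hA)
      have s3 : r ((c * h) * (c * h)) ((h * c) * (h * c)) ∨
          (c * h) * (c * h) = (h * c) * (h * c) := le_mul hr harch hA hA
      have e1 : c * (c * c ^ (q - 1)) = c ^ (q + 1) := by group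
      have e2 : c * (c * (h * h)) = c * (c * h) * h := by group
      have e3 : c * (h * c) * h = (c * h) * (c * h) := by group
      have e4 : (h * c) * (h * c) = g * g := by rw [hg]
      rw [e1, e2] at s1
      rw [e3] at s2
      rw [e4] at s3
      exact le_trans' hr (le_trans' hr s1 s2) s3
    · -- h * c ⪯ c * h
      have s1 : r (c ^ (q - 1) * (c * c)) ((h * h) * (c * c)) ∨
          c ^ (q - 1) * (c * c) = (h * h) * (c * c) := le_ri hr harch (c * c) lower
      have s2 : r (h * (h * c) * c) (h * (c * h) * c) ∨
          h * (h * c) * c = h * (c * h) * c :=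
        le_ri hr harch c (le_li hr h hB)
      have e1 : c ^ (q - 1) * (c * c) = c ^ (q + 1) := by group
      have e2 : (h * h) * (c * c) = h * (h * c) * c := by group
      have e3 : h * (c * h) * c = (h * c) * (h * c) := by group
      have e4 : (h * c) * (h * c) = g * g := by rw [hg]
      rw [e1, e2] at s1
      rw [e3, e4] at s2
      exact le_trans' hr s1 s2
  rcases upper with h' | h'
  · exact asym hr h' hq2
  · rw [h'] at hq2; exact hr.1 _ hq2

end ALIO

/-- A group admitting an Archimedean left-invariant order is abelian and
torsion-free. -/
theorem archimedean_left_order_abelian_torsionFree {Γ : Type*} [Group Γ]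
    (r : Γ → Γ → Prop) (hr : IsLeftInvariantOrder r)
    (harch : ∀ γ lam : Γ, γ ≠ 1 → lam ≠ 1 → ∃ n : ℤ, r γ (lam ^ n) ∨ γ = lam ^ n) :
    (∀ a b : Γ, a * b = b * a) ∧ (∀ g : Γ, ∀ n : ℕ, 0 < n → g ^ n = 1 → g = 1) := by
  constructor
  · intro a b
    by_contra hne
    have hc : (b * a)⁻¹ * (a * b) ≠ 1 := by
      intro e
      exact hne ((inv_mul_eq_one.mp e).symm)
    rcases hr.2.2.1 1 _ (Ne.symm hc) with h | h
    · exact absurd (ALIO.key hr harch a b h) id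
    · refine absurd (ALIO.key hr harch b a ?_) id
      have := ALIO.inv_pos hr h
      simpa [mul_inv_rev] using this
  · intro g n hn hgn
    by_contra hg1
    rcases hr.2.2.1 1 g (fun e => hg1 e.symm) with h | h
    · have := ALIO.pow_pos hr h (n - 1)
      rw [show n - 1 + 1 = n from by omega, hgn] at this
      exact hr.1 1 this
    · have := ALIO.pow_pos hr (ALIO.inv_pos hr h) (n - 1)
      rw [show n - 1 + 1 = n from by omega, inv_pow, hgn] at this
      simp at this
      exact hr.1 1 this
end

section
/- Let ≺ be a left-invariant order on a finitely generated nontrivial group Γ that is recurrent for every cyclic subgroup, and let Λ be the unique maximal proper convex subgroup of Γ. Then Λ is a normal subgroup of Γ. -/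
/-- A subgroup is convex for `r` iff it contains everything between two of its
elements. -/
def IsConvexSubgroup {Γ : Type*} [Group Γ] (r : Γ → Γ → Prop) (Λ : Subgroup Γ) : Prop :=
  ∀ lam₁ lam₂ g, lam₁ ∈ Λ → lam₂ ∈ Λ → r lam₁ g → r g lam₂ → g ∈ Λ

section Aux

variable {Γ : Type*} [Group Γ] {r : Γ → Γ → Prop}

lemma aux_pos_pow (hr : IsLeftInvariantOrder r) {g : Γ} (hg : r 1 g) :
    ∀ k, 0 < k → r 1 (g ^ k) := by
  intro k hk
  induction k with
  | zero => omega
  | succ n ih =>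
    rcases Nat.eq_zero_or_pos n with h | h
    · subst h; simpa using hg
    · have h1 : r (g ^ n) (g ^ (n + 1)) := by
        have := hr.2.2.2 (g ^ n) 1 g hg
        simpa [pow_succ] using this
      exact hr.2.1 _ _ _ (ih h) h1

lemma aux_neg_pow (hr : IsLeftInvariantOrder r) {g : Γ} (hg : r g 1) :
    ∀ k, 0 < k → r (g ^ k) 1 := by
  intro k hk
  induction k with
  | zero => omega
  | succ n ih =>
    rcases Nat.eq_zero_or_pos n with h | h
    · subst h; simpa using hg
    · have h1 : r (g ^ (n + 1)) (g ^ n) := by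
        have := hr.2.2.2 (g ^ n) g 1 hg
        simpa [pow_succ] using this
      exact hr.2.1 _ _ _ h1 (ih h)

lemma aux_neg_of_pos (hr : IsLeftInvariantOrder r) {g : Γ} (hg : r 1 g) : r g⁻¹ 1 := by
  have := hr.2.2.2 g⁻¹ 1 g hg
  simpa using this

/-- transport a bound `r x (g^a)` upward along `a ≤ b`. -/
lemma aux_extend_up (hr : IsLeftInvariantOrder r) {g : Γ} (hg : r 1 g) {a b : ℕ} {x : Γ}
    (hab : a ≤ b) (hx : r x (g ^ a)) : r x (g ^ b) := by
  rcases Nat.eq_or_lt_of_le hab with h | h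
  · subst h; exact hx
  · have h0 : r 1 (g ^ (b - a)) := aux_pos_pow hr hg _ (by omega)
    have h1 := hr.2.2.2 (g ^ a) 1 (g ^ (b - a)) h0
    rw [mul_one, ← pow_add] at h1
    have hb : a + (b - a) = b := by omega
    rw [hb] at h1
    exact hr.2.1 _ _ _ hx h1

lemma aux_extend_dn (hr : IsLeftInvariantOrder r) {g : Γ} (hg : r 1 g) {a b : ℕ} {x : Γ}
    (hab : a ≤ b) (hx : r (g⁻¹ ^ a) x) : r (g⁻¹ ^ b) x := by
  rcases Nat.eq_or_lt_of_le hab with h | h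
  · subst h; exact hx
  · have h0 : r (g⁻¹ ^ (b - a)) 1 := aux_neg_pow hr (aux_neg_of_pos hr hg) _ (by omega)
    have h1 := hr.2.2.2 (g⁻¹ ^ a) (g⁻¹ ^ (b - a)) 1 h0
    rw [mul_one, ← pow_add] at h1
    have hb : a + (b - a) = b := by omega
    rw [hb] at h1
    exact hr.2.1 _ _ _ h1 hx

/-- transport `r (x * g^k) w` down to `r (x * g^n) w` for `n ≤ k`. -/
lemma aux_le_mul_pow (hr : IsLeftInvariantOrder r) {g : Γ} (hg : r 1 g) {n k : ℕ} {x w : Γ}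
    (hnk : n ≤ k) (h : r (x * g ^ k) w) : r (x * g ^ n) w := by
  rcases Nat.eq_or_lt_of_le hnk with h' | h'
  · subst h'; exact h
  · have h0 : r 1 (g ^ (k - n)) := aux_pos_pow hr hg _ (by omega)
    have h1 := hr.2.2.2 (x * g ^ n) 1 (g ^ (k - n)) h0
    rw [mul_one, mul_assoc, ← pow_add] at h1
    have hb : n + (k - n) = k := by omega
    rw [hb] at h1
    exact hr.2.1 _ _ _ h1 h

/-- transport `r w (x * g⁻¹^k)` down to `r w (x * g⁻¹^n)` for `n ≤ k`. -/
lemma aux_mul_pow_neg_le (hr : IsLeftInvariantOrder r) {g : Γ} (hg : r 1 g) {n k : ℕ} {x w : Γ}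
    (hnk : n ≤ k) (h : r w (x * g⁻¹ ^ k)) : r w (x * g⁻¹ ^ n) := by
  rcases Nat.eq_or_lt_of_le hnk with h' | h'
  · subst h'; exact h
  · have h0 : r (g⁻¹ ^ (k - n)) 1 := aux_neg_pow hr (aux_neg_of_pos hr hg) _ (by omega)
    have h1 := hr.2.2.2 (x * g⁻¹ ^ n) (g⁻¹ ^ (k - n)) 1 h0
    rw [mul_one, mul_assoc, ← pow_add] at h1
    have hb : n + (k - n) = k := by omega
    rw [hb] at h1
    exact hr.2.1 _ _ _ h h1

lemma aux_rec2 (hrec : IsRecurrentOrder r) (γ a b : Γ) (hab : r a b) (N : ℕ) :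
    ∃ n : ℕ, N ≤ n ∧ 0 < n ∧ r (a * γ ^ n) (b * γ ^ n) := by
  have hchain : ∀ i j : Fin 2, i < j → r (![a, b] i) (![a, b] j) := by
    intro i j hij
    fin_cases i <;> fin_cases j <;> simp_all
  obtain ⟨n, h1, h2, h3⟩ := hrec γ 2 ![a, b] hchain N
  refine ⟨n, h1, h2, ?_⟩
  have := h3 0 1 (by decide)
  simpa using this

lemma aux_key {Γ : Type*} [Group Γ]
    (r : Γ → Γ → Prop) (hr : IsLeftInvariantOrder r) (hrec : IsRecurrentOrder r)
    (Λ : Subgroup Γ) (hconv : IsConvexSubgroup r Λ)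
    (hmax : ∀ Λ' : Subgroup Γ, IsConvexSubgroup r Λ' → Λ' ≠ ⊤ → Λ' ≤ Λ)
    (γ l : Γ) (hl : l ∈ Λ) (hpos : r 1 (γ * l * γ⁻¹)) (hout : γ * l * γ⁻¹ ∉ Λ) : False := by
  set g : Γ := γ * l * γ⁻¹ with hgdef
  -- the convex subgroup of elements bounded by powers of g
  have htrans := hr.2.1
  have hlinv := hr.2.2.2
  let C : Subgroup Γ :=
    { carrier := {x | ∃ n : ℕ, 0 < n ∧ r x (g ^ n) ∧ r (g⁻¹ ^ n) x}
      one_mem' := by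
        refine ⟨1, one_pos, by simpa using hpos, by simpa using aux_neg_of_pos hr hpos⟩
      mul_mem' := by
        rintro x y ⟨m, hm, hxu, hxl⟩ ⟨n, hn, hyu, hyl⟩
        -- upper bound
        obtain ⟨k, hkn, hk0, hk⟩ := aux_rec2 hrec g x (g ^ m) hxu n
        rw [← pow_add] at hk
        have h1 : r (x * g ^ n) (g ^ (m + k)) := aux_le_mul_pow hr hpos hkn hk
        have h2 : r (x * y) (x * g ^ n) := hlinv x y (g ^ n) hyu
        have hup : r (x * y) (g ^ (m + k)) := htrans _ _ _ h2 h1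
        -- lower bound
        obtain ⟨k', hk'n, hk'0, hk'⟩ := aux_rec2 hrec g⁻¹ (g⁻¹ ^ m) x hxl n
        rw [← pow_add] at hk'
        have h3 : r (g⁻¹ ^ (m + k')) (x * g⁻¹ ^ n) := aux_mul_pow_neg_le hr hpos hk'n hk'
        have h4 : r (x * g⁻¹ ^ n) (x * y) := hlinv x (g⁻¹ ^ n) y hyl
        have hdn : r (g⁻¹ ^ (m + k')) (x * y) := htrans _ _ _ h3 h4
        refine ⟨(m + k) + (m + k'), by omega, ?_, ?_⟩
        · exact aux_extend_up hr hpos (by omega) hup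
        · exact aux_extend_dn hr hpos (by omega) hdn
      inv_mem' := by
        rintro x ⟨n, hn, hxu, hxl⟩
        -- upper bound on x⁻¹
        have hz : r (x⁻¹ * g⁻¹ ^ n) 1 := by
          have := hlinv x⁻¹ (g⁻¹ ^ n) x hxl
          simpa using this
        obtain ⟨k, hkn, hk0, hk⟩ := aux_rec2 hrec g (x⁻¹ * g⁻¹ ^ n) 1 hz n
        rw [one_mul] at hk
        have hid : x⁻¹ * g⁻¹ ^ n * g ^ k = x⁻¹ * g ^ (k - n) := by
          have h1 : g ^ k = g ^ n * g ^ (k - n) := by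
            rw [← pow_add]; congr 1; omega
          rw [h1, mul_assoc, inv_pow, inv_mul_cancel_left]
        rw [hid] at hk
        have hup : r (x⁻¹ * g ^ 0) (g ^ k) := aux_le_mul_pow hr hpos (Nat.zero_le _) hk
        rw [pow_zero, mul_one] at hup
        -- lower bound on x⁻¹
        have hw : r 1 (x⁻¹ * g ^ n) := by
          have := hlinv x⁻¹ x (g ^ n) hxu
          simpa using this
        obtain ⟨k', hk'n, hk'0, hk'⟩ := aux_rec2 hrec g⁻¹ 1 (x⁻¹ * g ^ n) hw n
        rw [one_mul] at hk'
        have hid' : x⁻¹ * g ^ n * g⁻¹ ^ k' = x⁻¹ * g⁻¹ ^ (k' - n) := by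
          have h1 : g⁻¹ ^ k' = g⁻¹ ^ n * g⁻¹ ^ (k' - n) := by
            rw [← pow_add]; congr 1; omega
          rw [h1, mul_assoc, inv_pow, mul_inv_cancel_left]
        rw [hid'] at hk'
        have hdn : r (g⁻¹ ^ k') (x⁻¹ * g⁻¹ ^ 0) :=
          aux_mul_pow_neg_le hr hpos (Nat.zero_le _) hk'
        rw [pow_zero, mul_one] at hdn
        refine ⟨k + k', by omega, ?_, ?_⟩
        · exact aux_extend_up hr hpos (by omega) hup
        · exact aux_extend_dn hr hpos (by omega) hdn }
  -- g ∈ C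
  have hgC : g ∈ C := by
    refine ⟨2, by omega, ?_, ?_⟩
    · have := hlinv g 1 g hpos
      simpa [pow_two] using this
    · have hneg : r g⁻¹ 1 := aux_neg_of_pos hr hpos
      have h1 : r (g⁻¹ * g⁻¹) g⁻¹ := by
        have := hlinv g⁻¹ g⁻¹ 1 hneg
        simpa using this
      have h2 : r (g⁻¹ * g⁻¹) 1 := htrans _ _ _ h1 hneg
      have h3 : r (g⁻¹ * g⁻¹) g := htrans _ _ _ h2 hpos
      simpa [pow_two] using h3
  -- C is convex
  have hCconv : IsConvexSubgroup r C := by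
    rintro l1 l2 x ⟨n1, hn1, h1u, h1l⟩ ⟨n2, hn2, h2u, h2l⟩ hx1 hx2
    refine ⟨n1 + n2, by omega, ?_, ?_⟩
    · exact aux_extend_up hr hpos (by omega) (htrans _ _ _ hx2 h2u)
    · exact aux_extend_dn hr hpos (by omega) (htrans _ _ _ h1l hx1)
  -- γ ∈ C since C = ⊤
  have hγC : γ ∈ C := by
    by_cases hC : C = ⊤
    · rw [hC]; trivial
    · exact absurd (hmax C hCconv hC hgC) hout
  obtain ⟨m, hm, hu, hdn⟩ := hγC
  have hgm : g ^ m = γ * l ^ m * γ⁻¹ := by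
    rw [hgdef, conj_pow]
  have hgm' : g⁻¹ ^ m = γ * (l ^ m)⁻¹ * γ⁻¹ := by
    rw [hgdef]
    rw [show (γ * l * γ⁻¹)⁻¹ = γ * l⁻¹ * γ⁻¹ by group]
    rw [conj_pow, inv_pow]
  rw [hgm] at hu
  rw [hgm'] at hdn
  have h5 : r ((l ^ m)⁻¹) γ⁻¹ := by
    have := hlinv ((l ^ m)⁻¹ * γ⁻¹) γ (γ * l ^ m * γ⁻¹) hu
    simpa [mul_assoc] using this
  have h6 : r γ⁻¹ (l ^ m) := by
    have := hlinv (l ^ m * γ⁻¹) (γ * (l ^ m)⁻¹ * γ⁻¹) γ hdn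
    simpa [mul_assoc] using this
  have hγinv : γ⁻¹ ∈ Λ :=
    hconv ((l ^ m)⁻¹) (l ^ m) γ⁻¹ (inv_mem (pow_mem hl m)) (pow_mem hl m) h5 h6
  have hγΛ : γ ∈ Λ := by simpa using inv_mem hγinv
  exact hout (mul_mem (mul_mem hγΛ hl) (inv_mem hγΛ))

end Aux

/-- The maximal proper convex subgroup of a finitely generated nontrivial group
with a recurrent left-invariant order is normal. -/
theorem maximal_convex_subgroup_normal {Γ : Type*} [Group Γ]
    (hfg : Group.FG Γ) (hnt : Nontrivial Γ)
    (r : Γ → Γ → Prop) (hr : IsLeftInvariantOrder r) (hrec : IsRecurrentOrder r)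
    (Λ : Subgroup Γ) (hconv : IsConvexSubgroup r Λ) (hproper : Λ ≠ ⊤)
    (hmax : ∀ Λ' : Subgroup Γ, IsConvexSubgroup r Λ' → Λ' ≠ ⊤ → Λ' ≤ Λ) :
    Λ.Normal := by
  constructor
  intro l hl γ
  by_contra hout
  have hne : γ * l * γ⁻¹ ≠ 1 := by
    intro h
    exact hout (h ▸ Λ.one_mem)
  rcases hr.2.2.1 1 (γ * l * γ⁻¹) (Ne.symm hne) with hpos | hneg
  · exact aux_key r hr hrec Λ hconv hmax γ l hl hpos hout
  · have hpos' : r 1 (γ * l⁻¹ * γ⁻¹) := by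
      have := hr.2.2.2 (γ * l⁻¹ * γ⁻¹) (γ * l * γ⁻¹) 1 hneg
      have he : γ * l⁻¹ * γ⁻¹ * (γ * l * γ⁻¹) = 1 := by group
      rw [he, mul_one] at this
      exact this
    have hout' : γ * l⁻¹ * γ⁻¹ ∉ Λ := by
      intro h
      have := inv_mem h
      rw [show (γ * l⁻¹ * γ⁻¹)⁻¹ = γ * l * γ⁻¹ by group] at this
      exact hout this
    exact aux_key r hr hrec Λ hconv hmax γ l⁻¹ (inv_mem hl) hpos' hout'
end

section
/- Every group that admits a left-invariant order which is recurrent for every cyclic subgroup is locally indicable. -/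
/-!
Call `x` cofinal when its powers are unbounded above. Recurrence lets one move inequalities
`a ≤ b` to `a * cⁿ ≤ b * cⁿ` for arbitrarily large (or small) `n`; this makes the elements `x`
with `x` and `x⁻¹` both below powers of a fixed `c ≥ 1` a subgroup, and hence the non-cofinal
elements a normal subgroup `C`. In a finitely generated nontrivial group, an upper bound of the
generators and their inverses is cofinal, so `C` is proper. The order descends to `G ⧸ C`, where
every element lies between two powers of any positive element. Such an Archimedean left order is
bi-invariant, and Hölder's argument makes the quotient abelian; being torsion-free, finitely
generated and nontrivial, it maps onto `ℤ`.
-/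

namespace IsLeftInvariantOrder

variable {Γ : Type*} [Group Γ] {r : Γ → Γ → Prop}

-- `<` is definitionally `r`, and `a ≤ b` is definitionally `a = b ∨ r a b`.
noncomputable abbrev linearOrder_s13 (hr : IsLeftInvariantOrder r) : LinearOrder Γ :=
  have : IsStrictTotalOrder Γ r :=
    { irrefl := hr.1, trans := hr.2.1
      trichotomous := fun a b hab hba ↦ by_contra fun h ↦ (hr.2.2.1 a b h).elim hab hba }
  open Classical in linearOrderOfSTO r

theorem mulLeftMono (hr : IsLeftInvariantOrder r) :
    letI := hr.linearOrder_s13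
    MulLeftMono Γ :=
  letI := hr.linearOrder_s13
  ⟨fun γ a b ↦ Or.imp (congrArg (γ * ·)) (hr.2.2.2 γ a b)⟩

theorem comap (hr : IsLeftInvariantOrder r) {H : Type*} [Group H] (f : H →* Γ)
    (hf : Function.Injective f) : IsLeftInvariantOrder fun a b ↦ r (f a) (f b) :=
  ⟨fun a ↦ hr.1 (f a), fun _ _ _ ↦ hr.2.1 _ _ _, fun _ _ hab ↦ hr.2.2.1 _ _ (hf.ne hab),
    fun γ a b h ↦ by simpa only [map_mul] using hr.2.2.2 (f γ) _ _ h⟩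

end IsLeftInvariantOrder

theorem isLeftInvariantOrder_of_cone {Q : Type*} [Group Q] {P : Set Q} (h1 : 1 ∉ P)
    (hmul : ∀ a ∈ P, ∀ b ∈ P, a * b ∈ P) (htot : ∀ a : Q, a ≠ 1 → a ∈ P ∨ a⁻¹ ∈ P) :
    IsLeftInvariantOrder fun a b : Q ↦ a⁻¹ * b ∈ P := by
  refine ⟨fun a ↦ by simpa using h1, fun a b c hab hbc ↦ ?_, fun a b hab ↦ ?_, fun γ a b h ↦ ?_⟩
  · simpa [mul_assoc] using hmul _ hab _ hbc
  · simpa using htot (a⁻¹ * b) (by simpa [inv_mul_eq_one] using hab)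
  · simpa [mul_assoc] using h

theorem IsRecurrentOrder.comap {Γ : Type*} [Group Γ] {r : Γ → Γ → Prop} (hrec : IsRecurrentOrder r)
    {H : Type*} [Group H] (f : H →* Γ) : IsRecurrentOrder fun a b ↦ r (f a) (f b) := by
  intro γ k lam hlam N
  obtain ⟨n, hNn, hn, h⟩ := hrec (f γ) k (f ∘ lam) hlam N
  exact ⟨n, hNn, hn, fun i j hij ↦ by simpa using h i j hij⟩

def PairRecurrent (G : Type*) [Monoid G] [LT G] : Prop :=
  ∀ a b : G, a < b → ∀ (γ : G) (N : ℕ), ∃ n, N ≤ n ∧ a * γ ^ n < b * γ ^ n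

theorem IsRecurrentOrder.pairRecurrent {Γ : Type*} [Group Γ] {r : Γ → Γ → Prop}
    (hr : IsLeftInvariantOrder r) (hrec : IsRecurrentOrder r) :
    letI := hr.linearOrder_s13
    PairRecurrent Γ := by
  intro a b hab γ N
  obtain ⟨n, hNn, -, h⟩ := hrec γ 2 ![a, b] (fun i j hij ↦ by
    fin_cases i <;> fin_cases j <;> first | exact hab | simp at hij) N
  exact ⟨n, hNn, h 0 1 Fin.zero_lt_one⟩

section LeftOrdered

variable {G : Type*} [Group G] [LinearOrder G] [MulLeftMono G]

theorem zpow_right_mono' {c : G} (hc : 1 ≤ c) : Monotone fun n : ℤ ↦ c ^ n :=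
  monotone_int_of_le_succ fun n ↦ by simpa [zpow_add_one] using mul_le_mul_right hc (c ^ n)

theorem zpow_right_strictMono' {c : G} (hc : 1 < c) : StrictMono fun n : ℤ ↦ c ^ n :=
  strictMono_int_of_lt_succ fun n ↦ by simpa [zpow_add_one] using mul_lt_mul_right hc (c ^ n)

end LeftOrdered

theorem CommGroup.exists_surjective_multiplicative_int {A : Type*} [CommGroup A] [Group.FG A]
    [IsMulTorsionFree A] [Nontrivial A] : ∃ φ : A →* Multiplicative ℤ, Function.Surjective φ := by
  have : AddGroup.FG (Additive A) := GroupFG.iff_add_fg.mp ‹_›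
  have : Module.Finite ℤ (Additive A) := Module.Finite.iff_addGroup_fg.mpr ‹_›
  let b := Module.Free.chooseBasis ℤ (Additive A)
  obtain ⟨i⟩ := b.index_nonempty
  refine ⟨AddMonoidHom.toMultiplicativeRight (b.coord i).toAddMonoidHom,
    fun n ↦ ⟨(n.toAdd • b i).toMul, ?_⟩⟩
  simp

section Archimedean

variable {H : Type*} [Group H] [LinearOrder H] [MulLeftMono H]

theorem exists_one_lt_mul_self_le [MulRightMono H] (hdense : ∀ u : H, 1 < u → ∃ w, 1 < w ∧ w < u)
    {d : H} (hd : 1 < d) : ∃ z : H, 1 < z ∧ z * z ≤ d := by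
  obtain ⟨w, hw1, hwd⟩ := hdense d hd
  by_cases hww : w * w ≤ d
  · exact ⟨w, hw1, hww⟩
  refine ⟨d * w⁻¹, lt_mul_inv_iff_lt.mpr hwd, ?_⟩
  have : w⁻¹ * d * w⁻¹ ≤ 1 :=
    mul_inv_le_one_iff_le.mpr (inv_mul_le_iff_le_mul.mpr (not_le.mp hww).le)
  calc d * w⁻¹ * (d * w⁻¹) = d * (w⁻¹ * d * w⁻¹) := by group
    _ ≤ d * 1 := mul_le_mul_right this d
    _ = d := mul_one d

variable (harch : ∀ d x : H, 1 < d → ∃ j k : ℤ, d ^ j ≤ x ∧ x ≤ d ^ k)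
include harch

theorem exists_zpow_le_lt_zpow_add_one {d : H} (hd : 1 < d) (x : H) :
    ∃ m : ℤ, d ^ m ≤ x ∧ x < d ^ (m + 1) := by
  obtain ⟨j, k, hj, hk⟩ := harch d x hd
  obtain ⟨m, hm, hmax⟩ := Int.exists_greatest_of_bdd (P := fun n ↦ d ^ n ≤ x)
    ⟨k, fun n hn ↦ (zpow_right_strictMono' hd).le_iff_le.mp (hn.trans hk)⟩ ⟨j, hj⟩
  exact ⟨m, hm, lt_of_not_ge fun h ↦ by have := hmax _ h; omega⟩

theorem one_lt_conj_of_archimedean {d : H} (hd : 1 < d) (γ : H) : 1 < γ⁻¹ * d * γ := by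
  by_contra! h
  obtain ⟨m, hm, hγ⟩ := exists_zpow_le_lt_zpow_add_one harch hd γ
  refine hγ.not_ge ?_
  calc d ^ (m + 1) = d * d ^ m := by rw [add_comm, zpow_one_add]
    _ ≤ d * γ := mul_le_mul_right hm d
    _ = γ * (γ⁻¹ * d * γ) := by group
    _ ≤ γ * 1 := mul_le_mul_right h γ
    _ = γ := mul_one γ

theorem mulRightMono_of_archimedean : MulRightMono H := by
  refine ⟨fun γ a b h ↦ ?_⟩
  rcases h.eq_or_lt with rfl | h
  · rfl
  have := one_lt_conj_of_archimedean harch (lt_inv_mul_iff_lt.mpr h) γ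
  exact (lt_inv_mul_iff_lt.mp (by simpa [mul_assoc] using this)).le

theorem isCyclic_of_archimedean {u : H} (hu : 1 < u) (hmin : ∀ w : H, 1 < w → u ≤ w) :
    IsCyclic H := by
  refine ⟨u, fun x ↦ ?_⟩
  obtain ⟨m, hm, hx⟩ := exists_zpow_le_lt_zpow_add_one harch hu x
  have hlt : (u ^ m)⁻¹ * x < u := inv_mul_lt_iff_lt_mul.mpr (by rwa [← zpow_add_one])
  have heq : 1 = (u ^ m)⁻¹ * x :=
    (le_inv_mul_iff_le.mpr hm).eq_or_lt.resolve_right fun h ↦ (hmin _ h).not_gt hlt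
  exact ⟨m, (inv_mul_eq_one.mp heq.symm)⟩

theorem not_one_lt_commutator_of_archimedean [MulRightMono H]
    (hdense : ∀ u : H, 1 < u → ∃ w, 1 < w ∧ w < u) (x y : H) : ¬ 1 < x * y * (y * x)⁻¹ := by
  intro hd
  obtain ⟨z, hz, hzd⟩ := exists_one_lt_mul_self_le hdense hd
  obtain ⟨a, hax, hxa⟩ := exists_zpow_le_lt_zpow_add_one harch hz x
  obtain ⟨b, hby, hyb⟩ := exists_zpow_le_lt_zpow_add_one harch hz y
  have hxy : x * y < z ^ (a + 1) * z ^ (b + 1) := mul_lt_mul_of_lt_of_le hxa hyb.le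
  have hyx : z ^ b * z ^ a ≤ y * x := mul_le_mul' hby hax
  refine hzd.not_gt ?_
  calc x * y * (y * x)⁻¹ < z ^ (a + 1) * z ^ (b + 1) * (z ^ b * z ^ a)⁻¹ :=
        mul_lt_mul_of_lt_of_le hxy (inv_le_inv_iff.mpr hyx)
    _ = z * z := by
      simp only [← zpow_add, ← zpow_neg]
      rw [← zpow_two]
      congr 1
      ring

theorem mul_comm_of_archimedean (x y : H) : x * y = y * x := by
  by_cases hdisc : ∃ u : H, 1 < u ∧ ∀ w : H, 1 < w → u ≤ w
  · obtain ⟨u, hu, hmin⟩ := hdisc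
    have := isCyclic_of_archimedean harch hu hmin
    exact IsCyclic.commGroup.mul_comm x y
  push Not at hdisc
  have := mulRightMono_of_archimedean harch
  by_contra hxy
  rcases (show x * y * (y * x)⁻¹ ≠ 1 from mt mul_inv_eq_one.mp hxy).lt_or_gt with h | h
  · exact not_one_lt_commutator_of_archimedean harch hdisc y x
      (by simpa using Left.one_lt_inv_iff.mpr h)
  · exact not_one_lt_commutator_of_archimedean harch hdisc x y h

theorem exists_surjective_of_archimedean [Group.FG H] [Nontrivial H] :
    ∃ φ : H →* Multiplicative ℤ, Function.Surjective φ := by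
  have := mulRightMono_of_archimedean harch
  let _ : CommGroup H := { mul_comm := mul_comm_of_archimedean harch }
  exact CommGroup.exists_surjective_multiplicative_int

end Archimedean

def CofinalPowers {G : Type*} [Group G] [LT G] (x : G) : Prop :=
  ∀ z, ∃ m : ℤ, z < x ^ m

theorem CofinalPowers.inv {G : Type*} [Group G] [LT G] {x : G} (hx : CofinalPowers x) :
    CofinalPowers x⁻¹ := fun z ↦
  let ⟨m, hm⟩ := hx z
  ⟨-m, by simpa using hm⟩

theorem not_cofinalPowers_one {G : Type*} [Group G] [Preorder G] : ¬ CofinalPowers (1 : G) :=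
  fun h ↦ by
  obtain ⟨m, hm⟩ := h 1
  simp at hm

open Filter

theorem PairRecurrent.frequently_atTop {G : Type*} [Group G] [PartialOrder G]
    (hrec : PairRecurrent G) {a b : G} (h : a ≤ b) (c : G) :
    ∃ᶠ n : ℤ in atTop, a * c ^ n ≤ b * c ^ n := by
  rw [Filter.frequently_atTop]
  intro N
  rcases h.lt_or_eq with h | rfl
  · obtain ⟨n, hNn, hn⟩ := hrec a b h c N.toNat
    exact ⟨n, by omega, by simpa using hn.le⟩
  · exact ⟨N, le_rfl, le_rfl⟩

theorem PairRecurrent.frequently_atBot {G : Type*} [Group G] [PartialOrder G]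
    (hrec : PairRecurrent G) {a b : G} (h : a ≤ b) (c : G) :
    ∃ᶠ n : ℤ in atBot, a * c ^ n ≤ b * c ^ n := by
  rw [Filter.frequently_atBot]
  intro N
  obtain ⟨n, hNn, hn⟩ := (hrec.frequently_atTop h c⁻¹).forall_exists_of_atTop (-N)
  exact ⟨-n, by omega, by simpa [inv_zpow'] using hn⟩

section LeftOrdered

variable {G : Type*} [Group G] [LinearOrder G] [MulLeftMono G]

namespace PairRecurrent

variable (hrec : PairRecurrent G)
include hrec

section Bounded

variable {c : G} (hc : 1 ≤ c)
include hc

theorem exists_mul_le_zpow {x y : G} {k l : ℤ} (hx : x ≤ c ^ k) (hy : y ≤ c ^ l) :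
    ∃ K : ℤ, x * y ≤ c ^ K := by
  obtain ⟨n, hln, hn⟩ := (hrec.frequently_atTop hx c).forall_exists_of_atTop l
  refine ⟨k + n, ?_⟩
  calc x * y ≤ x * c ^ n := mul_le_mul_right (hy.trans (zpow_right_mono' hc hln)) x
    _ ≤ c ^ k * c ^ n := hn
    _ = c ^ (k + n) := (zpow_add c k n).symm

theorem exists_zpow_le_inv {x : G} {k : ℤ} (hx : x ≤ c ^ k) : ∃ j : ℤ, c ^ j ≤ x⁻¹ := by
  obtain ⟨n, hnk, hn⟩ := (hrec.frequently_atBot hx c).forall_exists_of_atBot (-k)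
  refine ⟨n, le_inv_iff_mul_le_one_left.mpr ?_⟩
  calc x * c ^ n ≤ c ^ k * c ^ n := hn
    _ = c ^ (k + n) := (zpow_add c k n).symm
    _ ≤ c ^ (0 : ℤ) := zpow_right_mono' hc (by omega)
    _ = 1 := zpow_zero c

theorem exists_inv_le_zpow {x : G} {j : ℤ} (hx : c ^ j ≤ x) : ∃ k : ℤ, x⁻¹ ≤ c ^ k := by
  obtain ⟨n, hjn, hn⟩ := (hrec.frequently_atTop hx c).forall_exists_of_atTop (-j)
  refine ⟨n, inv_le_iff_one_le_mul'.mpr ?_⟩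
  calc (1 : G) = c ^ (0 : ℤ) := (zpow_zero c).symm
    _ ≤ c ^ (j + n) := zpow_right_mono' hc (by omega)
    _ = c ^ j * c ^ n := zpow_add c j n
    _ ≤ x * c ^ n := hn

def zpowBoundedSubgroup : Subgroup G where
  carrier := {x | (∃ k : ℤ, x ≤ c ^ k) ∧ ∃ k : ℤ, x⁻¹ ≤ c ^ k}
  one_mem' := ⟨⟨0, by simp⟩, ⟨0, by simp⟩⟩
  inv_mem' := fun ⟨hx, hx'⟩ ↦ ⟨by simpa using hx', by simpa using hx⟩
  mul_mem' := fun ⟨⟨_, hx⟩, ⟨_, hx'⟩⟩ ⟨⟨_, hy⟩, ⟨_, hy'⟩⟩ ↦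
    ⟨hrec.exists_mul_le_zpow hc hx hy, by simpa using hrec.exists_mul_le_zpow hc hy' hx'⟩

theorem mem_zpowBoundedSubgroup_of_le {x : G} (hx : x ≤ c) (hx' : x⁻¹ ≤ c) :
    x ∈ hrec.zpowBoundedSubgroup hc :=
  ⟨⟨1, by simpa using hx⟩, ⟨1, by simpa using hx'⟩⟩

theorem cofinalPowers_of_mem {x : G} (hx : x ∈ hrec.zpowBoundedSubgroup hc)
    (hcof : CofinalPowers x) : CofinalPowers c := fun z ↦
  let ⟨m, hm⟩ := hcof z
  let ⟨k, hk⟩ := (zpow_mem hx m).1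
  ⟨k, hm.trans_le hk⟩

end Bounded

theorem exists_zpow_le_of_cofinalPowers {c : G} (hc : 1 ≤ c) (hcof : CofinalPowers c) (x : G) :
    ∃ j : ℤ, c ^ j ≤ x := by
  obtain ⟨k, hk⟩ := hcof x⁻¹
  simpa using hrec.exists_zpow_le_inv hc hk.le

theorem not_cofinalPowers_mul {x y : G} (hx : ¬ CofinalPowers x) (hy : ¬ CofinalPowers y) :
    ¬ CofinalPowers (x * y) := by
  have one_le_mabs' (z : G) : 1 ≤ |z|ₘ := (le_total 1 z).elim (·.trans (le_mabs_self z))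
    fun h ↦ (Left.one_le_inv_iff.mpr h).trans (inv_le_mabs z)
  have not_cofinalPowers_mabs {z : G} (hz : ¬ CofinalPowers z) : ¬ CofinalPowers |z|ₘ := by
    rcases mabs_choice z with h | h <;> rw [h]
    exacts [hz, fun h' ↦ hz (by simpa using h'.inv)]
  set c := max |x|ₘ |y|ₘ
  have hc : 1 ≤ c := (one_le_mabs' x).trans (le_max_left _ _)
  have hB {z : G} (hz : |z|ₘ ≤ c) : z ∈ hrec.zpowBoundedSubgroup hc :=
    hrec.mem_zpowBoundedSubgroup_of_le hc ((le_mabs_self z).trans hz) ((inv_le_mabs z).trans hz)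
  have hcof : ¬ CofinalPowers c := by
    rcases max_choice |x|ₘ |y|ₘ with h | h <;> rw [show c = _ from h]
    exacts [not_cofinalPowers_mabs hx, not_cofinalPowers_mabs hy]
  exact fun h ↦ hcof <| hrec.cofinalPowers_of_mem hc
    (mul_mem (hB (le_max_left _ _)) (hB (le_max_right _ _))) h

theorem cofinalPowers_conj {x : G} (hx : CofinalPowers x) (g : G) :
    CofinalPowers (g * x * g⁻¹) := by
  wlog hx1 : 1 < x generalizing x
  · have hx1' : x < 1 :=
      (Ne.lt_or_gt fun h ↦ not_cofinalPowers_one (h ▸ hx)).resolve_right hx1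
    simpa [mul_assoc] using (this hx.inv (Left.one_lt_inv_iff.mpr hx1')).inv
  intro z
  obtain ⟨s, hs⟩ := hx (g⁻¹ * z)
  obtain ⟨j, hj⟩ := hrec.exists_zpow_le_of_cofinalPowers hx1.le hx g⁻¹
  refine ⟨s - j, ?_⟩
  rw [conj_zpow, mul_assoc, ← inv_mul_lt_iff_lt_mul]
  calc g⁻¹ * z < x ^ s := hs
    _ = x ^ (s - j) * x ^ j := by rw [← zpow_add, sub_add_cancel]
    _ ≤ x ^ (s - j) * g⁻¹ := mul_le_mul_right hj _

def nonCofinalSubgroup : Subgroup G where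
  carrier := {x | ¬ CofinalPowers x}
  one_mem' := not_cofinalPowers_one
  inv_mem' := fun hx h ↦ hx (by simpa using h.inv)
  mul_mem' := hrec.not_cofinalPowers_mul

@[simp]
theorem mem_nonCofinalSubgroup {x : G} : x ∈ hrec.nonCofinalSubgroup ↔ ¬ CofinalPowers x :=
  Iff.rfl

instance nonCofinalSubgroup_normal : hrec.nonCofinalSubgroup.Normal :=
  ⟨fun _ hx g h ↦ hx (by simpa [mul_assoc] using hrec.cofinalPowers_conj h g⁻¹)⟩

theorem cofinalPowers_of_le {w v : G} (hw1 : 1 < w) (hw : CofinalPowers w) (h : w ≤ v) :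
    CofinalPowers v := by
  have hv : 1 ≤ v := hw1.le.trans h
  refine hrec.cofinalPowers_of_mem hv (hrec.mem_zpowBoundedSubgroup_of_le hv h ?_) hw
  exact (Left.inv_lt_one_iff.mpr hw1).le.trans hv

theorem inv_lt_of_not_cofinalPowers {w v : G} (hw1 : 1 < w) (hw : CofinalPowers w)
    (hv : ¬ CofinalPowers v) : w⁻¹ < v := by
  by_contra! h
  have hw' : w⁻¹ ≤ 1 := (Left.inv_lt_one_iff.mpr hw1).le
  have hc : 1 ≤ v⁻¹ := Left.one_le_inv_iff.mpr (h.trans hw')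
  obtain ⟨k, hk⟩ := hrec.exists_inv_le_zpow hc (j := -1) (by simpa using h)
  have hmem : w ∈ hrec.zpowBoundedSubgroup hc := ⟨⟨k, by simpa using hk⟩, ⟨0, by simpa using hw'⟩⟩
  exact hv (by simpa using (hrec.cofinalPowers_of_mem hc hmem hw).inv)

theorem exists_one_lt_cofinalPowers [Group.FG G] [Nontrivial G] :
    ∃ c : G, 1 < c ∧ CofinalPowers c := by
  classical
  obtain ⟨S, hS⟩ := Group.FG.out (G := G)
  obtain ⟨g, hg⟩ : ∃ g : G, 1 < g := by
    obtain ⟨x, hx⟩ := exists_ne (1 : G)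
    exact hx.lt_or_gt.elim (fun h ↦ ⟨x⁻¹, Left.one_lt_inv_iff.mpr h⟩) fun h ↦ ⟨x, h⟩
  obtain ⟨c, hc⟩ := Finset.exists_le (insert g (S ∪ S.image (·⁻¹)))
  have hc1 : 1 < c := hg.trans_le (hc g (by simp))
  have hB : hrec.zpowBoundedSubgroup hc1.le = ⊤ := by
    rw [eq_top_iff, ← hS, Subgroup.closure_le]
    intro s hs
    replace hs : s ∈ S := hs
    exact hrec.mem_zpowBoundedSubgroup_of_le hc1.le (hc s (by simp [hs])) (hc s⁻¹ (by simp [hs]))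
  refine ⟨c, hc1, fun z ↦ ?_⟩
  obtain ⟨k, hk⟩ := (hB ▸ Subgroup.mem_top z : z ∈ hrec.zpowBoundedSubgroup hc1.le).1
  exact ⟨k + 1, hk.trans_lt (by simpa [zpow_add_one] using mul_lt_mul_right hc1 (c ^ k))⟩

def quotientCone : Set (G ⧸ hrec.nonCofinalSubgroup) :=
  QuotientGroup.mk '' {x | 1 < x ∧ CofinalPowers x}

theorem mk_mem_quotientCone {x : G} :
    (x : G ⧸ hrec.nonCofinalSubgroup) ∈ hrec.quotientCone ↔ 1 < x ∧ CofinalPowers x := by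
  refine ⟨?_, fun hx ↦ ⟨x, hx, rfl⟩⟩
  rintro ⟨w, ⟨hw1, hw⟩, hwx⟩
  have hc : w⁻¹ * x ∈ hrec.nonCofinalSubgroup := QuotientGroup.eq.mp hwx
  refine ⟨?_, ?_⟩
  · simpa using inv_lt_iff_one_lt_mul'.mp (hrec.inv_lt_of_not_cofinalPowers hw1 hw hc)
  · by_contra hx
    have : x * (w⁻¹ * x)⁻¹ ∈ hrec.nonCofinalSubgroup := mul_mem (by simpa using hx) (inv_mem hc)
    exact (by simpa using this : ¬ CofinalPowers w) hw

theorem isLeftInvariantOrder_quotient :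
    IsLeftInvariantOrder fun a b : G ⧸ hrec.nonCofinalSubgroup ↦ a⁻¹ * b ∈ hrec.quotientCone := by
  refine isLeftInvariantOrder_of_cone (fun h ↦ ?_) ?_ fun a ha ↦ ?_
  · exact not_cofinalPowers_one ((hrec.mk_mem_quotientCone (x := 1)).mp h).2
  · rintro _ ⟨a, ⟨ha1, ha⟩, rfl⟩ _ ⟨b, ⟨hb1, -⟩, rfl⟩
    exact ⟨a * b, ⟨Left.one_lt_mul ha1 hb1,
      hrec.cofinalPowers_of_le ha1 ha (le_mul_of_one_le_right' hb1.le)⟩, rfl⟩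
  · induction a using QuotientGroup.induction_on with | H x => ?_
    have hx : CofinalPowers x := by simpa using mt (QuotientGroup.eq_one_iff x).mpr ha
    rcases (show x ≠ 1 from fun h ↦ not_cofinalPowers_one (h ▸ hx)).lt_or_gt with h | h
    · exact .inr ⟨x⁻¹, ⟨Left.one_lt_inv_iff.mpr h, hx.inv⟩, rfl⟩
    · exact .inl ⟨x, ⟨h, hx⟩, rfl⟩

theorem mk_le_mk {x y : G} (h : x ≤ y) :
    letI := hrec.isLeftInvariantOrder_quotient.linearOrder_s13
    (x : G ⧸ hrec.nonCofinalSubgroup) ≤ y := by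
  by_cases hxy : x⁻¹ * y ∈ hrec.nonCofinalSubgroup
  · exact .inl (QuotientGroup.eq.mpr hxy)
  · have hne : x ≠ y := by rintro rfl; simp at hxy
    exact .inr <| hrec.mk_mem_quotientCone.mpr
      ⟨lt_inv_mul_iff_lt.mpr (h.lt_of_ne hne), by simpa using hxy⟩

theorem archimedean_quotient :
    letI := hrec.isLeftInvariantOrder_quotient.linearOrder_s13
    ∀ d x : G ⧸ hrec.nonCofinalSubgroup, 1 < d → ∃ j k : ℤ, d ^ j ≤ x ∧ x ≤ d ^ k := by
  intro d x hd
  induction d using QuotientGroup.induction_on with | H d => ?_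
  induction x using QuotientGroup.induction_on with | H x => ?_
  obtain ⟨hd1, hd⟩ : 1 < d ∧ CofinalPowers d := hrec.mk_mem_quotientCone.mp
    (by simpa using (show (1 : G ⧸ hrec.nonCofinalSubgroup)⁻¹ * d ∈ hrec.quotientCone from hd))
  obtain ⟨j, hj⟩ := hrec.exists_zpow_le_of_cofinalPowers hd1.le hd x
  obtain ⟨k, hk⟩ := hd x
  exact ⟨j, k, by simpa using hrec.mk_le_mk hj, by simpa using hrec.mk_le_mk hk.le⟩

end PairRecurrent

end LeftOrdered

theorem PairRecurrent.exists_surjective {G : Type*} [Group G] [LinearOrder G] [MulLeftMono G]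
    [Group.FG G] [Nontrivial G] (hrec : PairRecurrent G) :
    ∃ φ : G →* Multiplicative ℤ, Function.Surjective φ := by
  obtain ⟨c, hc1, hc⟩ := hrec.exists_one_lt_cofinalPowers
  set C := hrec.nonCofinalSubgroup
  let _ := hrec.isLeftInvariantOrder_quotient.linearOrder_s13
  have := hrec.isLeftInvariantOrder_quotient.mulLeftMono
  have : Nontrivial (G ⧸ C) :=
    ⟨c, 1, fun h ↦ (QuotientGroup.eq_one_iff c).mp h hc⟩
  have : Group.FG (G ⧸ C) := Group.fg_of_surjective (QuotientGroup.mk'_surjective C)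
  obtain ⟨φ, hφ⟩ := exists_surjective_of_archimedean hrec.archimedean_quotient
  exact ⟨φ.comp (QuotientGroup.mk' C), hφ.comp (QuotientGroup.mk'_surjective C)⟩

theorem exists_surjective_of_isRecurrentOrder {G : Type*} [Group G] [Group.FG G] [Nontrivial G]
    {r : G → G → Prop} (hr : IsLeftInvariantOrder r) (hrec : IsRecurrentOrder r) :
    ∃ φ : G →* Multiplicative ℤ, Function.Surjective φ :=
  letI := hr.linearOrder_s13
  have := hr.mulLeftMono
  (hrec.pairRecurrent hr).exists_surjective

/-- A group admitting a left-invariant order that is recurrent for every cyclic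
subgroup is locally indicable. -/
theorem recurrent_order_locallyIndicable {Γ : Type*} [Group Γ]
    (r : Γ → Γ → Prop) (hr : IsLeftInvariantOrder r) (hrec : IsRecurrentOrder r) :
    ∀ H : Subgroup Γ, H ≠ ⊥ → Group.FG H →
      ∃ φ : H →* Multiplicative ℤ, Function.Surjective φ := by
  intro H hH _
  have : Nontrivial H := (Subgroup.nontrivial_iff_ne_bot H).mpr hH
  exact exists_surjective_of_isRecurrentOrder (hr.comap H.subtype H.subtype_injective)
    (hrec.comap H.subtype)
end

section
/- Let Γ be a countable left-orderable group and suppose there exists a Γ-invariant probability measure on the compact space O of left-invariant orders on Γ (with Γ acting by right translation). Then Γ admits a left-invariant order that is recurrent for every cyclic subgroup. -/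
/-! Poincaré recurrence. Right translation by `γ` preserves `μ`, hence is conservative, so
`μ`-almost every point returns infinitely often to each of the countably many cylinder sets
"`λ₁ ≺ ⋯ ≺ λ_r`". Since `μ` is a probability measure concentrated on orders, some order `≺`
has this property, and the `n`-th return of `≺` to the cylinder of a chain under translation
by `γ⁻¹` says exactly that `λ₁γⁿ ≺ ⋯ ≺ λ_rγⁿ`. -/

open MeasureTheory

/-- Right translation by `γ` on the ambient space `Γ × Γ → Bool` of encoded
relations. -/
def actB {Γ : Type*} [Group Γ] (γ : Γ) (f : Γ × Γ → Bool) : Γ × Γ → Bool :=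
  fun p => f (p.1 * γ⁻¹, p.2 * γ⁻¹)

open Filter

section Recurrence

variable {α : Type*} [MeasurableSpace α] {μ : Measure α} {f : α → α}

theorem MeasureTheory.Conservative.ae_forall_mem_imp_frequently_image_mem {ι : Type*}
    [Countable ι] (hf : Conservative f μ) {s : ι → Set α} (hs : ∀ i, MeasurableSet (s i)) :
    ∀ᵐ x ∂μ, ∀ i, x ∈ s i → ∃ᶠ n in atTop, f^[n] x ∈ s i :=
  ae_all_iff.2 fun i => hf.ae_mem_imp_frequently_image_mem (hs i).nullMeasurableSet

end Recurrence

section Translation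

variable {Γ : Type*}

def chainSet {k : ℕ} (lam : Fin k → Γ) : Set (Γ × Γ → Bool) :=
  {f | ∀ i j : Fin k, i < j → f (lam i, lam j) = true}

theorem measurableSet_chainSet {k : ℕ} (lam : Fin k → Γ) : MeasurableSet (chainSet lam) := by
  have : chainSet lam = ⋂ (i : Fin k) (j : Fin k) (_ : i < j),
      (fun f : Γ × Γ → Bool => f (lam i, lam j)) ⁻¹' {true} := by
    ext f
    simp [chainSet]
  rw [this]
  exact .iInter fun i => .iInter fun j => .iInter fun _ =>
    measurable_pi_apply _ (measurableSet_singleton true)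

variable [Group Γ]

theorem actB_iterate (γ : Γ) (n : ℕ) (f : Γ × Γ → Bool) (p : Γ × Γ) :
    (actB γ)^[n] f p = f (p.1 * γ⁻¹ ^ n, p.2 * γ⁻¹ ^ n) := by
  induction n generalizing f with
  | zero => simp
  | succ n ih =>
    rw [Function.iterate_succ_apply, ih]
    simp only [actB, mul_assoc, ← pow_succ]

theorem measurable_actB (γ : Γ) : Measurable (actB γ : (Γ × Γ → Bool) → Γ × Γ → Bool) :=
  measurable_pi_lambda _ fun _ => measurable_pi_apply _

theorem actB_inv_iterate_mem_chainSet_iff {k : ℕ} (lam : Fin k → Γ) (γ : Γ) (n : ℕ)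
    (f : Γ × Γ → Bool) :
    (actB γ⁻¹)^[n] f ∈ chainSet lam ↔ f ∈ chainSet (fun i => lam i * γ ^ n) := by
  simp only [chainSet, Set.mem_ofPred_eq, actB_iterate, inv_inv]

theorem isRecurrentOrder_of_frequently_mem_chainSet {f : Γ × Γ → Bool}
    (hf : ∀ (γ : Γ) (k : ℕ) (lam : Fin k → Γ), f ∈ chainSet lam →
      ∃ᶠ n in atTop, f ∈ chainSet (fun i => lam i * γ ^ n)) :
    IsRecurrentOrder (fun a b => f (a, b) = true) := by
  intro γ k lam hlam N
  obtain ⟨n, hn, hmem⟩ := frequently_atTop.1 (hf γ k lam hlam) (max N 1)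
  exact ⟨n, le_of_max_le_left hn, le_of_max_le_right hn, hmem⟩

end Translation

theorem recurrent_order_of_invariant_measure_general {Γ : Type*} [Group Γ] [Countable Γ]
    (μ : Measure (Γ × Γ → Bool)) (hprob : IsProbabilityMeasure μ)
    (hconc : μ {f : Γ × Γ → Bool | IsLeftInvariantOrder (fun a b => f (a, b) = true)}ᶜ = 0)
    (hinv : ∀ γ : Γ, Measure.map (actB γ) μ = μ) :
    ∃ r : Γ → Γ → Prop, IsLeftInvariantOrder r ∧ IsRecurrentOrder r := by
  have hcons (γ : Γ) : Conservative (actB γ) μ :=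
    (MeasurePreserving.mk (measurable_actB γ) (hinv γ)).conservative
  have hreturn (γ : Γ) : ∀ᵐ f ∂μ, ∀ kl : Σ k, Fin k → Γ,
      f ∈ chainSet kl.2 → ∃ᶠ n in atTop, (actB γ⁻¹)^[n] f ∈ chainSet kl.2 :=
    (hcons γ⁻¹).ae_forall_mem_imp_frequently_image_mem fun kl => measurableSet_chainSet kl.2
  have hord : ∀ᵐ f ∂μ, IsLeftInvariantOrder (fun a b => f (a, b) = true) := ae_iff.2 hconc
  obtain ⟨f, hf_ord, hf_ret⟩ := (hord.and (ae_all_iff.2 hreturn)).exists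
  refine ⟨_, hf_ord, isRecurrentOrder_of_frequently_mem_chainSet fun γ k lam hlam => ?_⟩
  simpa only [actB_inv_iterate_mem_chainSet_iff] using hf_ret γ ⟨k, lam⟩ hlam

/-- If a countable left-orderable group has an invariant probability measure on
its space of left-invariant orders, then it admits a left-invariant order that
is recurrent for every cyclic subgroup. -/
theorem recurrent_order_of_invariant_measure {Γ : Type*} [Group Γ] [Countable Γ]
    (hLO : ∃ r : Γ → Γ → Prop, IsLeftInvariantOrder r)
    (μ : Measure (Γ × Γ → Bool)) (hprob : IsProbabilityMeasure μ)
    (hconc : μ {f : Γ × Γ → Bool | IsLeftInvariantOrder (fun a b => f (a, b) = true)}ᶜ = 0)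
    (hinv : ∀ γ : Γ, Measure.map (actB γ) μ = μ) :
    ∃ r : Γ → Γ → Prop, IsLeftInvariantOrder r ∧ IsRecurrentOrder r :=
  recurrent_order_of_invariant_measure_general μ hprob hconc hinv
end

section
/- Let Γ = F ⋉ ℤ², where F is a free subgroup of finite index in SL(2,ℤ) acting naturally on ℤ². Then Γ is locally indicable but admits no left-invariant order that is recurrent for every cyclic subgroup. -/
/-!
A nontrivial subgroup `H` of `ℤ² ⋊ F` either has nontrivial image in `F`, which is then a
nontrivial free group (Nielsen–Schreier) and surjects onto `ℤ`, or lies in `ℤ²`, where some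
coordinate projection is a nontrivial, hence (up to scaling) surjective, map to `ℤ`.

A left-invariant order `≺` restricts to a positive cone `P = {v ∈ ℤ² | 1 ≺ v}`. For every such
cone there is a shear `B = 1 + N` with `N² = 0` and some `μ ∈ P` such that
`-Bᵐμ = -μ - m • Nμ ∈ P` for all large `m`. Some power `Bᵏ` lies in the finite-index subgroup
`F`, and recurrence for the cyclic subgroup generated by `γ = B⁻ᵏ` gives `1 ≺ γ⁻ⁿ μ γⁿ = Bᵏⁿμ`
for arbitrarily large `n`, contradicting `-Bᵏⁿμ ∈ P`.
-/

open Matrix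
open scoped MatrixGroups

structure IsPositiveCone {A : Type*} [AddGroup A] (P : A → Prop) : Prop where
  add : ∀ u v, P u → P v → P (u + v)
  not_neg : ∀ v, P v → ¬ P (-v)
  total : ∀ v, v ≠ 0 → P v ∨ P (-v)

namespace IsPositiveCone

variable {A : Type*} [AddGroup A] {P : A → Prop}

theorem neg (hP : IsPositiveCone P) : IsPositiveCone fun v => P (-v) where
  add u v hu hv := by simpa [neg_add_rev] using hP.add _ _ hv hu
  not_neg v hv hv' := hP.not_neg _ hv (by simpa using hv')
  total v hv := (hP.total v hv).symm.imp id (by simp)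

theorem add_nsmul (hP : IsPositiveCone P) {v w : A} (hv : P v) (hw : P w) (k : ℕ) :
    P (v + k • w) := by
  induction k with
  | zero => simpa using hv
  | succ k ih => simpa [succ_nsmul, add_assoc] using hP.add _ _ ih hw

end IsPositiveCone

theorem IsLeftInvariantOrder.isPositiveCone {G A : Type*} [Group G] [AddGroup A]
    {r : G → G → Prop} (hr : IsLeftInvariantOrder r) {f : Multiplicative A →* G}
    (hf : Function.Injective f) : IsPositiveCone fun a => r 1 (f (.ofAdd a)) := by
  obtain ⟨hirr, htrans, htot, hinv⟩ := hr
  have shift : ∀ u v, r 1 (f (.ofAdd v)) → r (f (.ofAdd u)) (f (.ofAdd (u + v))) := by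
    intro u v h
    simpa [← map_mul] using hinv (f (.ofAdd u)) _ _ h
  refine ⟨fun u v hu hv => htrans _ _ _ hu (shift u v hv), fun v hv hv' => ?_, fun v hv => ?_⟩
  · exact hirr 1 (htrans _ _ _ hv (by simpa using shift v (-v) hv'))
  · have hne : (1 : G) ≠ f (.ofAdd v) := fun h =>
      hv (by simpa using hf (h.symm.trans f.map_one.symm))
    rcases htot 1 _ hne with h | h
    · exact .inl h
    · exact .inr (by simpa [← map_mul] using hinv (f (.ofAdd (-v))) _ _ h)

theorem IsRecurrentOrder.exists_conj_pow {G : Type*} [Group G] {r : G → G → Prop}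
    (hR : IsRecurrentOrder r) (hr : IsLeftInvariantOrder r) {g : G} (hg : r 1 g) (γ : G)
    (N : ℕ) : ∃ n, N ≤ n ∧ r 1 ((γ ^ n)⁻¹ * g * γ ^ n) := by
  obtain ⟨n, hNn, -, hn⟩ := hR γ 2 ![1, g] (by
    intro i j hij
    fin_cases i <;> fin_cases j <;> simp_all) N
  refine ⟨n, hNn, ?_⟩
  simpa [mul_assoc] using hr.2.2.2 (γ ^ n)⁻¹ _ _ (hn 0 1 (by decide))

theorem one_add_pow_of_mul_self_eq_zero {R : Type*} [Semiring R] {x : R} (hx : x * x = 0)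
    (m : ℕ) : (1 + x) ^ m = 1 + m • x := by
  induction m with
  | zero => simp
  | succ m ih =>
    rw [pow_succ, ih, add_mul, one_mul, mul_add, mul_one, smul_mul_assoc, hx, smul_zero,
      add_zero, succ_nsmul', add_assoc]

def EventuallyNegates {n R : Type*} [Fintype n] [DecidableEq n] [Ring R]
    (P : (n → R) → Prop) (B : Matrix n n R) : Prop :=
  ∃ μ, P μ ∧ ∃ M : ℕ, ∀ m, M ≤ m → P (-(B ^ m *ᵥ μ))

namespace IsPositiveCone

theorem eventuallyNegates_one_add {n R : Type*} [Fintype n] [DecidableEq n] [Ring R]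
    {P : (n → R) → Prop} (hP : IsPositiveCone P) {N : Matrix n n R} (hN : N * N = 0)
    {μ ν : n → R} (hNμ : N *ᵥ μ = ν) (hμ : P μ) (hν : P (-ν)) {M : ℕ}
    (hM : P (-(μ + M • ν))) : EventuallyNegates P (1 + N) := by
  refine ⟨μ, hμ, M, fun m hm => ?_⟩
  obtain ⟨k, rfl⟩ := Nat.exists_eq_add_of_le hm
  convert hP.add_nsmul hM hν k using 1
  rw [one_add_pow_of_mul_self_eq_zero hN, add_mulVec, one_mulVec, smul_mulVec, hNμ,
    _root_.add_nsmul]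
  simp only [neg_add_rev, smul_neg]
  abel

variable {P : (Fin 2 → ℤ) → Prop}

theorem eventuallyNegates_lowerShear (hP : IsPositiveCone P) (he₁ : P ![1, 0]) {s : ℤ}
    (hs : ∀ a, P ![a, s]) : EventuallyNegates P (1 + !![0, 0; -s, 0]) :=
  hP.eventuallyNegates_one_add (by ext i j; fin_cases i <;> fin_cases j <;> simp)
    (ν := ![0, -s]) (by ext i; fin_cases i <;> simp) he₁ (by simpa using hs 0) (M := 1)
    (by simpa using hs (-1))

theorem eventuallyNegates_upperShear (hP : IsPositiveCone P) (he₁ : P ![1, 0]) {a n : ℤ}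
    (ha : P ![a, -1]) (hn : P ![n, 1]) : EventuallyNegates P (1 + !![0, 1; 0, 0]) := by
  -- `M` is chosen so that `-((a, -1) + M • (-1, 0)) = (n, 1) + k • e₁`.
  obtain ⟨M, k, hMk⟩ : ∃ M k : ℕ, (M : ℤ) = n + a + k :=
    ⟨(n + a).toNat, (-(n + a)).toNat, by omega⟩
  refine hP.eventuallyNegates_one_add (by ext i j; fin_cases i <;> fin_cases j <;> simp)
    (ν := ![-1, 0]) (by ext i; fin_cases i <;> simp) ha (by simpa using he₁) (M := M) ?_
  convert hP.add_nsmul hn he₁ k using 1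
  ext i; fin_cases i <;> simp [hMk]; ring

theorem forall_neg_of_not_exists (hP : IsPositiveCone P) {t : ℤ} (ht : t ≠ 0)
    (h : ¬∃ a, P ![a, t]) (a : ℤ) : P ![a, -t] := by
  simpa using (hP.total ![-a, t] (by simp [ht])).resolve_left fun h' => h ⟨-a, h'⟩

-- Once `e₁ ∈ P`: if `P` meets both lines `y = ±1`, the upper shear drags `(a, -1) ∈ P` to
-- `(a - m, -1) ∈ -P`; otherwise `P` contains a whole line `y = s` and the lower shear works.
theorem exists_eventuallyNegates (hP : IsPositiveCone P) :
    ∃ B : SL(2, ℤ), EventuallyNegates P B := by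
  wlog he₁ : P ![1, 0] generalizing P
  · obtain ⟨B, μ, hμ, M, hM⟩ := this hP.neg ((hP.total _ (by simp)).resolve_left he₁)
    exact ⟨B, -μ, hμ, M, fun m hm => by simpa [mulVec_neg] using hM m hm⟩
  by_cases hdown : ∃ a, P ![a, -1]
  · by_cases hup : ∃ n, P ![n, 1]
    · obtain ⟨a, ha⟩ := hdown
      obtain ⟨n, hn⟩ := hup
      exact ⟨⟨_, by simp [det_fin_two]⟩, hP.eventuallyNegates_upperShear he₁ ha hn⟩
    · exact ⟨⟨_, by simp [det_fin_two]⟩, hP.eventuallyNegates_lowerShear he₁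
        (hP.forall_neg_of_not_exists one_ne_zero hup)⟩
  · exact ⟨⟨_, by simp [det_fin_two]⟩, hP.eventuallyNegates_lowerShear he₁ (s := 1)
      (by simpa using hP.forall_neg_of_not_exists (by norm_num) hdown)⟩

end IsPositiveCone

theorem MonoidHom.exists_surjective_of_ne_one {G : Type*} [Group G]
    (f : G →* Multiplicative ℤ) (hf : f ≠ 1) :
    ∃ ψ : G →* Multiplicative ℤ, Function.Surjective ψ := by
  obtain ⟨g, hg⟩ : ∃ g, f g ≠ 1 := by
    by_contra! h; exact hf (MonoidHom.ext h)
  have : Infinite f.range :=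
    ((infinite_zpowers.mpr (by rwa [isOfFinOrder_iff_eq_one])).mono
      ((Subgroup.zpowers_le (H := f.range)).mpr ⟨g, rfl⟩)).to_subtype
  let e : f.range ≃* Multiplicative ℤ := mulEquivOfCyclicCardEq (by
    rw [Nat.card_eq_zero_of_infinite, Nat.card_eq_zero_of_infinite])
  exact ⟨e.toMonoidHom.comp f.rangeRestrict, e.surjective.comp f.rangeRestrict_surjective⟩

theorem IsFreeGroup.exists_surjective_int (G : Type*) [Group G] [IsFreeGroup G] [Nontrivial G] :
    ∃ ψ : G →* Multiplicative ℤ, Function.Surjective ψ := by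
  obtain ⟨x⟩ : Nonempty (IsFreeGroup.Generators G) := by
    by_contra! h
    exact not_subsingleton G (IsFreeGroup.toFreeGroup G).toEquiv.subsingleton
  refine ⟨IsFreeGroup.lift fun _ => Multiplicative.ofAdd 1,
    fun w => ⟨IsFreeGroup.of x ^ w.toAdd, ?_⟩⟩
  rw [map_zpow, IsFreeGroup.lift_of, ← ofAdd_zsmul, smul_eq_mul, mul_one, ofAdd_toAdd]

theorem SemidirectProduct.exists_surjective_int_of_isFreeGroup {ι F : Type*} [Group F]
    [IsFreeGroup F] (φ : F →* MulAut (Multiplicative (ι → ℤ)))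
    (H : Subgroup (Multiplicative (ι → ℤ) ⋊[φ] F)) (hH : H ≠ ⊥) :
    ∃ ψ : H →* Multiplicative ℤ, Function.Surjective ψ := by
  by_cases hK : H.map rightHom = ⊥
  · have hle : H ≤ inl.range := by
      rwa [range_inl_eq_ker_rightHom, ← Subgroup.map_eq_bot_iff]
    let j : H →* Multiplicative (ι → ℤ) :=
      (MonoidHom.ofInjective inl_injective).symm.toMonoidHom.comp (Subgroup.inclusion hle)
    have hj : Function.Injective j := fun _ _ hab =>
      Subgroup.inclusion_injective hle ((MonoidHom.ofInjective inl_injective).symm.injective hab)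
    obtain ⟨h, hh⟩ : ∃ h : H, h ≠ 1 := by
      simpa [Subgroup.ne_bot_iff_exists_ne_one] using hH
    obtain ⟨i, hi⟩ : ∃ i, (j h).toAdd i ≠ 0 :=
      Function.ne_iff.mp fun h0 => hh (hj (by rw [map_one]; exact h0))
    refine ((AddMonoidHom.toMultiplicative (Pi.evalAddMonoidHom (fun _ => ℤ) i)).comp j
      |>.exists_surjective_of_ne_one fun h1 => hi ?_)
    simpa using DFunLike.congr_fun h1 h
  · have : Nontrivial (H.map rightHom) := (Subgroup.nontrivial_iff_ne_bot _).mpr hK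
    obtain ⟨ψ, hψ⟩ := IsFreeGroup.exists_surjective_int (H.map rightHom)
    exact ⟨ψ.comp (rightHom.subgroupMap H), hψ.comp (rightHom.subgroupMap_surjective H)⟩

/-- The semidirect product `F ⋉ ℤ²`, for a free finite-index subgroup `F` of
`SL(2,ℤ)` acting by matrix multiplication, is locally indicable but admits no
left-invariant order that is recurrent for every cyclic subgroup. -/
theorem semidirect_locallyIndicable_not_recurrent
    (F : Subgroup (Matrix.SpecialLinearGroup (Fin 2) ℤ))
    [IsFreeGroup F] [F.FiniteIndex]
    (φ : F →* MulAut (Multiplicative (Fin 2 → ℤ)))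
    (hφ : ∀ (A : F) (v : Fin 2 → ℤ),
      φ A (Multiplicative.ofAdd v) =
        Multiplicative.ofAdd
          (((A : Matrix.SpecialLinearGroup (Fin 2) ℤ) : Matrix (Fin 2) (Fin 2) ℤ).mulVec v)) :
    (∀ H : Subgroup (SemidirectProduct (Multiplicative (Fin 2 → ℤ)) F φ),
        H ≠ ⊥ → Group.FG H →
        ∃ ψ : H →* Multiplicative ℤ, Function.Surjective ψ) ∧
    ¬ ∃ r : SemidirectProduct (Multiplicative (Fin 2 → ℤ)) F φ →
          SemidirectProduct (Multiplicative (Fin 2 → ℤ)) F φ → Prop,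
        IsLeftInvariantOrder r ∧ IsRecurrentOrder r := by
  refine ⟨fun H hH _ => SemidirectProduct.exists_surjective_int_of_isFreeGroup φ H hH, ?_⟩
  rintro ⟨r, hr, hR⟩
  have hP := IsLeftInvariantOrder.isPositiveCone hr SemidirectProduct.inl_injective
  obtain ⟨B, μ, hμ, M, hneg⟩ := hP.exists_eventuallyNegates
  obtain ⟨k, hk, -, hkF⟩ := F.exists_pow_mem_of_index_ne_zero F.index_ne_zero_of_finite B
  set A : F := ⟨B ^ k, hkF⟩⁻¹
  obtain ⟨n, hn, hpos⟩ := IsRecurrentOrder.exists_conj_pow hR hr hμ (.inr A) M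
  rw [← map_pow, ← map_inv, ← SemidirectProduct.inl_aut_inv, ← map_inv, hφ] at hpos
  have hB : (((A ^ n)⁻¹ : F) : Matrix (Fin 2) (Fin 2) ℤ) = (B : Matrix _ _ ℤ) ^ (k * n) := by
    simp [A, pow_mul]
  rw [hB] at hpos
  exact hP.not_neg _ hpos (hneg (k * n) (hn.trans (Nat.le_mul_of_pos_left n hk)))
end

section
/- Let ≺ be a left-invariant order on a group Γ and suppose there is a nonzero linear functional f : ℝ² → ℝ and an embedding of ℤ² into Γ such that f(v) > 0 implies v̄ ≻ e for all v ∈ ℤ². If T ∈ SL(2,ℤ) is a hyperbolic matrix with eigenvalues α₁ > 1 > α₂ > 0 and eigenvectors v₁, v₂ with f(v₁) > 0, and ≺ is recurrent for every cyclic subgroup with respect to the element T̄ conjugating by T, then for every v ∈ ℤ² with f(v) > 0 one has g(v) ≥ 0, where g is the linear functional with g(v₁) = 1, g(v₂) = 0; hence ker f = ker g is an eigenspace of T. -/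
open Filter Topology Matrix

section FloorLimit

variable {R : Type*} [Field R] [LinearOrder R] [IsStrictOrderedRing R] [TopologicalSpace R]
  [OrderTopology R] [FloorRing R]

theorem tendsto_int_floor_mul_div_atTop (a : R) :
    Tendsto (fun t ↦ (⌊a * t⌋ : R) / t) atTop (𝓝 a) := by
  have hlower : Tendsto (fun t : R ↦ a - t⁻¹) atTop (𝓝 a) := by
    simpa using tendsto_const_nhds.sub (tendsto_inv_atTop_zero (𝕜 := R))
  refine tendsto_of_tendsto_of_tendsto_of_le_of_le' hlower tendsto_const_nhds ?_ ?_
  · filter_upwards [eventually_gt_atTop 0] with t ht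
    rw [le_div_iff₀ ht, sub_mul, inv_mul_cancel₀ ht.ne']
    linarith [Int.lt_floor_add_one (a * t)]
  · filter_upwards [eventually_gt_atTop 0] with t ht
    rw [div_le_iff₀ ht]
    exact Int.floor_le _

end FloorLimit

namespace LinearMap

theorem nonneg_of_forall_intCast {ι : Type*} [Fintype ι] (f g : (ι → ℝ) →ₗ[ℝ] ℝ)
    (h : ∀ z : ι → ℤ, 0 < f (fun i ↦ (z i : ℝ)) → 0 ≤ g (fun i ↦ (z i : ℝ)))
    {x : ι → ℝ} (hx : 0 < f x) : 0 ≤ g x := by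
  by_contra! hgx
  have hlim : Tendsto (fun t : ℝ ↦ t⁻¹ • fun i ↦ (⌊x i * t⌋ : ℝ)) atTop (𝓝 x) :=
    tendsto_pi_nhds.2 fun i ↦ by
      simpa [div_eq_inv_mul] using tendsto_int_floor_mul_div_atTop (x i)
  have hf := ((f.continuous_of_finiteDimensional.tendsto x).comp hlim).eventually
    (lt_mem_nhds hx)
  have hg := ((g.continuous_of_finiteDimensional.tendsto x).comp hlim).eventually
    (gt_mem_nhds hgx)
  obtain ⟨t, ht, hft, hgt⟩ := ((eventually_gt_atTop 0).and (hf.and hg)).exists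
  simp only [Function.comp_apply, map_smul, smul_eq_mul] at hft hgt
  have hz := h (fun i ↦ ⌊x i * t⌋) (pos_of_mul_pos_right hft (inv_pos.2 ht).le)
  linarith [mul_nonneg (inv_pos.2 ht).le hz]

section PositiveCone

variable {E : Type*} [AddCommGroup E] [Module ℝ E] {f g : E →ₗ[ℝ] ℝ}

theorem nonneg_of_apply_eq_zero (h : ∀ x, 0 < f x → 0 ≤ g x) {v : E} (hv : 0 < f v) {y : E}
    (hy : f y = 0) : 0 ≤ g y := by
  have hlim : Tendsto (fun t : ℝ ↦ g y + t * g v) (𝓝[>] 0) (𝓝 (g y)) := by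
    have hcont : Continuous fun t : ℝ ↦ g y + t * g v := by fun_prop
    simpa using (hcont.tendsto 0).mono_left nhdsWithin_le_nhds
  refine ge_of_tendsto hlim (eventually_nhdsWithin_of_forall fun t (ht : 0 < t) ↦ ?_)
  simpa using h (y + t • v) (by simpa [hy] using mul_pos ht hv)

/-- A functional that is nonnegative wherever `f` is positive is a nonnegative multiple of `f`. -/
theorem smul_eq_smul_of_pos_imp_nonneg (h : ∀ x, 0 < f x → 0 ≤ g x) {v : E} (hv : 0 < f v) :
    f v • g = g v • f := by
  ext x
  set y := f v • x - f x • v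
  have hy : f y = 0 := by simp [y, mul_comm]
  have hneg : f (-y) = 0 := by simp [hy]
  have := le_antisymm (by simpa using nonneg_of_apply_eq_zero h hv hneg)
    (nonneg_of_apply_eq_zero h hv hy)
  simp only [y, map_sub, map_smul, smul_eq_mul] at this
  simp only [smul_apply, smul_eq_mul]
  linarith

end PositiveCone

end LinearMap

theorem exists_eq_smul_add_smul_of_linearIndependent {K V : Type*} [Field K] [AddCommGroup V]
    [Module K V] {v₁ v₂ : V} (h : LinearIndependent K ![v₁, v₂]) (hV : Module.finrank K V = 2)
    (x : V) : ∃ a b : K, x = a • v₁ + b • v₂ := by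
  have hspan := h.span_eq_top_of_card_eq_finrank (by simp [hV])
  rw [range_cons_cons_empty] at hspan
  obtain ⟨a, b, hab⟩ := Submodule.mem_span_pair.1 (hspan ▸ Submodule.mem_top (x := x))
  exact ⟨a, b, hab.symm⟩

section Eigenvectors

variable {m : Type*} [Fintype m] {A : Matrix m m ℝ} {α₁ α₂ : ℝ}
  {v₁ v₂ : m → ℝ}

theorem pow_mulVec_of_mulVec_eq_smul [DecidableEq m] {c : ℝ} {v : m → ℝ} (h : A *ᵥ v = c • v)
    (n : ℕ) : (A ^ n) *ᵥ v = c ^ n • v := by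
  induction n with
  | zero => simp
  | succ n ih => rw [pow_succ', ← mulVec_mulVec, ih, mulVec_smul, h, smul_smul, pow_succ]

theorem tendsto_inv_pow_smul_pow_mulVec [DecidableEq m] (h₁ : A *ᵥ v₁ = α₁ • v₁)
    (h₂ : A *ᵥ v₂ = α₂ • v₂) (hα : |α₂| < α₁) (a b : ℝ) :
    Tendsto (fun n : ℕ ↦ (α₁ ^ n)⁻¹ • (A ^ n) *ᵥ (a • v₁ + b • v₂)) atTop (𝓝 (a • v₁)) := by
  have hα₁ : 0 < α₁ := (abs_nonneg α₂).trans_lt hα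
  have hratio : |α₂ / α₁| < 1 := by rwa [abs_div, abs_of_pos hα₁, div_lt_one hα₁]
  have hexpand : ∀ n : ℕ, (α₁ ^ n)⁻¹ • (A ^ n) *ᵥ (a • v₁ + b • v₂) =
      a • v₁ + ((α₂ / α₁) ^ n * b) • v₂ := by
    intro n
    rw [mulVec_add, mulVec_smul, mulVec_smul, pow_mulVec_of_mulVec_eq_smul h₁,
      pow_mulVec_of_mulVec_eq_smul h₂, smul_add, smul_smul, smul_smul, smul_smul, smul_smul,
      div_pow]
    congr 2 <;> field_simp
  simp_rw [hexpand]
  simpa using tendsto_const_nhds.add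
    (((tendsto_pow_atTop_nhds_zero_of_abs_lt_one hratio).mul_const b).smul_const v₂)

theorem nonneg_of_frequently_nonneg_pow_mulVec [DecidableEq m] (h₁ : A *ᵥ v₁ = α₁ • v₁)
    (h₂ : A *ᵥ v₂ = α₂ • v₂) (hα : |α₂| < α₁) {f : (m → ℝ) →ₗ[ℝ] ℝ} (hfv₁ : 0 < f v₁)
    {a b : ℝ} (hfreq : ∃ᶠ n in atTop, 0 ≤ f ((A ^ n) *ᵥ (a • v₁ + b • v₂))) : 0 ≤ a := by
  have hα₁ : 0 < α₁ := (abs_nonneg α₂).trans_lt hα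
  have hlim := (f.continuous_of_finiteDimensional.tendsto _).comp
    (tendsto_inv_pow_smul_pow_mulVec h₁ h₂ hα a b)
  simp only [Function.comp_def, map_smul, smul_eq_mul] at hlim
  refine nonneg_of_mul_nonneg_left (ge_of_tendsto_of_frequently hlim ?_) hfv₁
  exact hfreq.mono fun n hn ↦ mul_nonneg (inv_nonneg.2 (pow_nonneg hα₁.le n)) hn

theorem apply_mulVec_smul_add_smul (h₁ : A *ᵥ v₁ = α₁ • v₁) (h₂ : A *ᵥ v₂ = α₂ • v₂)
    {g : (m → ℝ) →ₗ[ℝ] ℝ} (hg₁ : g v₁ = 1) (hg₂ : g v₂ = 0) (a b : ℝ) :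
    g (A *ᵥ (a • v₁ + b • v₂)) = α₁ * a := by
  simp [mulVec_add, mulVec_smul, h₁, h₂, hg₁, hg₂, mul_comm]

end Eigenvectors

theorem intCast_pow_mulVec {m : Type*} [Fintype m] [DecidableEq m] (M : Matrix m m ℤ) (n : ℕ)
    (v : m → ℤ) :
    (fun i ↦ (((M ^ n) *ᵥ v) i : ℝ)) = (M.map (Int.cast : ℤ → ℝ)) ^ n *ᵥ fun i ↦ (v i : ℝ) := by
  have hmap : (M ^ n).map (Int.cast : ℤ → ℝ) = (M.map Int.cast) ^ n :=
    map_pow (Int.castRingHom ℝ).mapMatrix M n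
  funext i
  rw [← hmap]
  exact RingHom.map_mulVec (Int.castRingHom ℝ) _ v i

section Orders

variable {Γ : Type*} [Group Γ]

/-- `IsRecurrentOrder r` says `∀ γ, IsRecurrentFor r γ`. -/
def IsRecurrentFor (r : Γ → Γ → Prop) (γ : Γ) : Prop :=
  ∀ (k : ℕ) (lam : Fin k → Γ), (∀ i j : Fin k, i < j → r (lam i) (lam j)) →
    ∀ N : ℕ, ∃ n : ℕ, N ≤ n ∧ 0 < n ∧ ∀ i j : Fin k, i < j → r (lam i * γ ^ n) (lam j * γ ^ n)

theorem IsRecurrentFor.frequently {r : Γ → Γ → Prop} {γ a b : Γ} (h : IsRecurrentFor r γ)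
    (hab : r a b) : ∃ᶠ n in atTop, r (a * γ ^ n) (b * γ ^ n) := by
  refine frequently_atTop.2 fun N ↦ ?_
  have hchain : ∀ i j : Fin 2, i < j → r (![a, b] i) (![a, b] j) := by
    intro i j hij
    fin_cases i <;> fin_cases j <;> simp_all
  obtain ⟨n, hn, -, hrn⟩ := h 2 ![a, b] hchain N
  exact ⟨n, hn, by simpa using hrn 0 1 Fin.zero_lt_one⟩

theorem conj_pow_eq_pow_mulVec {m : Type*} [Fintype m] [DecidableEq m]
    {ι : Multiplicative (m → ℤ) →* Γ} {M : Matrix m m ℤ} {γ : Γ}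
    (h : ∀ v, γ * ι (Multiplicative.ofAdd v) * γ⁻¹ = ι (Multiplicative.ofAdd (M *ᵥ v)))
    (n : ℕ) (v : m → ℤ) :
    γ ^ n * ι (Multiplicative.ofAdd v) * (γ ^ n)⁻¹ = ι (Multiplicative.ofAdd ((M ^ n) *ᵥ v)) := by
  induction n generalizing v with
  | zero => simp
  | succ n ih =>
    calc γ ^ (n + 1) * ι (Multiplicative.ofAdd v) * (γ ^ (n + 1))⁻¹
        = γ ^ n * (γ * ι (Multiplicative.ofAdd v) * γ⁻¹) * (γ ^ n)⁻¹ := by group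
      _ = ι (Multiplicative.ofAdd ((M ^ (n + 1)) *ᵥ v)) := by
        rw [h, ih, pow_succ, mulVec_mulVec]

namespace IsLeftInvariantOrder

variable {r : Γ → Γ → Prop}

theorem not_pos_inv (hr : IsLeftInvariantOrder r) {x : Γ} (hx : r 1 x) : ¬ r 1 x⁻¹ := by
  obtain ⟨hirrefl, htrans, -, hmul⟩ := hr
  intro hx'
  have hx1 : r x 1 := by simpa using hmul x 1 x⁻¹ hx'
  exact hirrefl 1 (htrans 1 x 1 hx hx1)

theorem frequently_pos_conj_pow (hr : IsLeftInvariantOrder r) {γ x : Γ}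
    (hγ : IsRecurrentFor r γ⁻¹) (hx : r 1 x) : ∃ᶠ n in atTop, r 1 (γ ^ n * x * (γ ^ n)⁻¹) := by
  obtain ⟨-, -, -, hmul⟩ := hr
  exact (hγ.frequently hx).mono fun n hn ↦ by
    simpa [mul_assoc, inv_pow] using hmul (γ ^ n) _ _ hn

theorem nonneg_of_pos (hr : IsLeftInvariantOrder r) {m : Type*}
    {ι : Multiplicative (m → ℤ) →* Γ} {f : (m → ℝ) →ₗ[ℝ] ℝ}
    (hpos : ∀ v : m → ℤ, 0 < f (fun i ↦ (v i : ℝ)) → r 1 (ι (Multiplicative.ofAdd v)))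
    {w : m → ℤ} (hw : r 1 (ι (Multiplicative.ofAdd w))) : 0 ≤ f (fun i ↦ (w i : ℝ)) := by
  by_contra! hneg
  refine hr.not_pos_inv hw ?_
  have hcast : (fun i ↦ ((-w) i : ℝ)) = -fun i ↦ (w i : ℝ) := by ext; simp
  simpa [← map_inv] using hpos (-w) (by rw [hcast, map_neg]; linarith)

end IsLeftInvariantOrder

end Orders

theorem recurrent_order_eigenfunctional_general {Γ : Type*} [Group Γ]
    (r : Γ → Γ → Prop) (hr : IsLeftInvariantOrder r)
    (ι : Multiplicative (Fin 2 → ℤ) →* Γ)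
    (f : (Fin 2 → ℝ) →ₗ[ℝ] ℝ)
    (hpos : ∀ v : Fin 2 → ℤ, 0 < f (fun i => (v i : ℝ)) →
      r 1 (ι (Multiplicative.ofAdd v)))
    (T : Matrix.SpecialLinearGroup (Fin 2) ℤ) (Tbar : Γ)
    (hconj : ∀ v : Fin 2 → ℤ,
      Tbar * ι (Multiplicative.ofAdd v) * Tbar⁻¹ =
        ι (Multiplicative.ofAdd ((T : Matrix (Fin 2) (Fin 2) ℤ).mulVec v)))
    (α₁ α₂ : ℝ) (hα₁ : 1 < α₁) (hα₂0 : 0 < α₂) (hα₂1 : α₂ < 1)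
    (v₁ v₂ : Fin 2 → ℝ)
    (heig₁ : ((T : Matrix (Fin 2) (Fin 2) ℤ).map (Int.cast : ℤ → ℝ)).mulVec v₁ = α₁ • v₁)
    (heig₂ : ((T : Matrix (Fin 2) (Fin 2) ℤ).map (Int.cast : ℤ → ℝ)).mulVec v₂ = α₂ • v₂)
    (hindep : LinearIndependent ℝ ![v₁, v₂])
    (hfv₁ : 0 < f v₁)
    (g : (Fin 2 → ℝ) →ₗ[ℝ] ℝ) (hg₁ : g v₁ = 1) (hg₂ : g v₂ = 0)
    (hrec : ∀ γ ∈ ({Tbar, Tbar⁻¹} : Set Γ), ∀ (k : ℕ) (lam : Fin k → Γ),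
      (∀ i j : Fin k, i < j → r (lam i) (lam j)) →
      ∀ N : ℕ, ∃ n : ℕ, N ≤ n ∧ 0 < n ∧
        ∀ i j : Fin k, i < j → r (lam i * γ ^ n) (lam j * γ ^ n)) :
    (∀ v : Fin 2 → ℤ, 0 < f (fun i => (v i : ℝ)) → 0 ≤ g (fun i => (v i : ℝ))) ∧
    LinearMap.ker f = LinearMap.ker g ∧
    ∀ x : Fin 2 → ℝ, x ∈ LinearMap.ker f →
      ((T : Matrix (Fin 2) (Fin 2) ℤ).map (Int.cast : ℤ → ℝ)).mulVec x ∈ LinearMap.ker f := by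
  have hα : |α₂| < α₁ := by rw [abs_of_pos hα₂0]; linarith
  have hdecomp (x : Fin 2 → ℝ) : ∃ b : ℝ, x = g x • v₁ + b • v₂ := by
    obtain ⟨a, b, rfl⟩ := exists_eq_smul_add_smul_of_linearIndependent hindep (by simp) x
    exact ⟨b, by simp [hg₁, hg₂]⟩
  have hint (v : Fin 2 → ℤ) (hv : 0 < f (fun i => (v i : ℝ))) : 0 ≤ g (fun i => (v i : ℝ)) := by
    obtain ⟨b, hb⟩ := hdecomp fun i => (v i : ℝ)
    refine nonneg_of_frequently_nonneg_pow_mulVec heig₁ heig₂ hα hfv₁ (b := b) ?_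
    rw [← hb]
    refine (hr.frequently_pos_conj_pow (hrec Tbar⁻¹ (by simp)) (hpos v hv)).mono fun n hn => ?_
    have hn' := hr.nonneg_of_pos hpos (conj_pow_eq_pow_mulVec hconj n v ▸ hn)
    rwa [intCast_pow_mulVec] at hn'
  have hfg : f v₁ • g = g v₁ • f := LinearMap.smul_eq_smul_of_pos_imp_nonneg
    (fun _ ↦ LinearMap.nonneg_of_forall_intCast f g hint) hfv₁
  have hker : LinearMap.ker f = LinearMap.ker g := by
    rw [← LinearMap.ker_smul g (f v₁) hfv₁.ne', hfg, hg₁, one_smul]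
  refine ⟨hint, hker, fun x hx => ?_⟩
  rw [hker, LinearMap.mem_ker] at hx ⊢
  obtain ⟨b, hb⟩ := hdecomp x
  rw [hb, apply_mulVec_smul_add_smul heig₁ heig₂ hg₁ hg₂, hx, mul_zero]

/-- The key eigenvalue estimate in the example: positivity of `f` on the
positive cone forces `g ≥ 0` there, so `ker f = ker g` is a `T`-invariant line
(an eigenspace of `T`). -/
theorem recurrent_order_eigenfunctional {Γ : Type*} [Group Γ]
    (r : Γ → Γ → Prop) (hr : IsLeftInvariantOrder r)
    (ι : Multiplicative (Fin 2 → ℤ) →* Γ) (hι : Function.Injective ι)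
    (f : (Fin 2 → ℝ) →ₗ[ℝ] ℝ) (hf : f ≠ 0)
    (hpos : ∀ v : Fin 2 → ℤ, 0 < f (fun i => (v i : ℝ)) →
      r 1 (ι (Multiplicative.ofAdd v)))
    (T : Matrix.SpecialLinearGroup (Fin 2) ℤ) (Tbar : Γ)
    (hconj : ∀ v : Fin 2 → ℤ,
      Tbar * ι (Multiplicative.ofAdd v) * Tbar⁻¹ =
        ι (Multiplicative.ofAdd ((T : Matrix (Fin 2) (Fin 2) ℤ).mulVec v)))
    (α₁ α₂ : ℝ) (hα₁ : 1 < α₁) (hα₂0 : 0 < α₂) (hα₂1 : α₂ < 1)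
    (v₁ v₂ : Fin 2 → ℝ)
    (heig₁ : ((T : Matrix (Fin 2) (Fin 2) ℤ).map (Int.cast : ℤ → ℝ)).mulVec v₁ = α₁ • v₁)
    (heig₂ : ((T : Matrix (Fin 2) (Fin 2) ℤ).map (Int.cast : ℤ → ℝ)).mulVec v₂ = α₂ • v₂)
    (hindep : LinearIndependent ℝ ![v₁, v₂])
    (hfv₁ : 0 < f v₁)
    (g : (Fin 2 → ℝ) →ₗ[ℝ] ℝ) (hg₁ : g v₁ = 1) (hg₂ : g v₂ = 0)
    (hrec : ∀ γ ∈ ({Tbar, Tbar⁻¹} : Set Γ), ∀ (k : ℕ) (lam : Fin k → Γ),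
      (∀ i j : Fin k, i < j → r (lam i) (lam j)) →
      ∀ N : ℕ, ∃ n : ℕ, N ≤ n ∧ 0 < n ∧
        ∀ i j : Fin k, i < j → r (lam i * γ ^ n) (lam j * γ ^ n)) :
    (∀ v : Fin 2 → ℤ, 0 < f (fun i => (v i : ℝ)) → 0 ≤ g (fun i => (v i : ℝ))) ∧
    LinearMap.ker f = LinearMap.ker g ∧
    ∀ x : Fin 2 → ℝ, x ∈ LinearMap.ker f →
      ((T : Matrix (Fin 2) (Fin 2) ℤ).map (Int.cast : ℤ → ℝ)).mulVec x ∈ LinearMap.ker f :=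
  recurrent_order_eigenfunctional_general r hr ι f hpos T Tbar hconj α₁ α₂ hα₁ hα₂0 hα₂1 v₁ v₂ heig₁
    heig₂ hindep hfv₁ g hg₁ hg₂ hrec
end
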